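/- arXiv:0909.1346 — 11 statements merged into one kernel-verified Lean document; each statement's English description precedes it below -/
import Mathlib

section
/- For every integer c ≥ 2 and every ε > 0 there exists an integer n₀ such that for every n ≥ n₀ and every recursive order ⪯ on the tuple space {1,…,n} × {0,1}^{c−1}, there exist a set T of n distinct tuples and a permutation σ of the c components with the following property: for every recursive order ⪯′ on the σ-permuted tuple space, the RunCount of the ⪯-sorted list of T is at least (c − ε) times the RunCount of the ⪯′-sorted list of σ(T). In other words, the number of column runs after the application of any recursive-order function can vary by a factor arbitrarily close to c under permutation of the columns. -/
/-!
In a recursive order every value of the first column occupies an interval, so two rows with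
different first entries compare as their first entries do. Sorting the `n` values of the first
column in this way and giving the `p`-th row the parity of `p` in every other column yields a table
whose sorted list changes in every column at every step: `c * n` runs. Swapping the first and
last columns puts a copy of the binary parity column first; every recursive order sorts it into
at most two runs, and the other `c - 2` copies of it follow along, so at most `n + 2 (c - 1)` runs
remain, and `c * n / (n + 2 (c - 1)) → c`.
-/

/-- The number of runs in column `i` of a list of rows: `1 +` the number of
adjacent pairs differing in component `i`, and `0` for the empty list. -/
def runsCol {c : ℕ} {N : Fin c → ℕ} (i : Fin c) :
    List (∀ k : Fin c, Fin (N k)) → ℕ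
  | [] => 0
  | a :: l => 1 + ((a :: l).zip l).countP (fun ab => decide (ab.1 i ≠ ab.2 i))

/-- The RunCount of a list of rows: the sum over all columns of the number of runs. -/
def runCount {c : ℕ} {N : Fin c → ℕ} (l : List (∀ k : Fin c, Fin (N k))) : ℕ :=
  ∑ i : Fin c, runsCol i l

/-- A relation on the tuple space `∏ i, {0,…,N i − 1}` is a *recursive order* if for
every `j` and all tuples `a ⪯ b ⪯ d` agreeing (`a` with `d`) on the first `j`
components, `b` also agrees with `a` on the first `j` components. -/
def IsRecursiveOrder {c : ℕ} (N : Fin c → ℕ)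
    (le : (∀ k : Fin c, Fin (N k)) → (∀ k : Fin c, Fin (N k)) → Prop) : Prop :=
  ∀ (j : ℕ) (a b d : ∀ k : Fin c, Fin (N k)), le a b → le b d →
    (∀ i : Fin c, (i : ℕ) < j → a i = d i) → ∀ i : Fin c, (i : ℕ) < j → b i = a i

def FibersOrdConnected {α β : Type*} (r : α → α → Prop) (g : α → β) : Prop :=
  ∀ ⦃a b d⦄, r a b → r b d → g a = g d → g b = g a

namespace FibersOrdConnected

variable {α β : Type*} {r : α → α → Prop} {g : α → β}

theorem rel_of_ne [Std.Total r] (h : FibersOrdConnected r g) {a b a' b' : α} (hab : r a b)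
    (hne : g a ≠ g b) (ha : g a' = g a) (hb : g b' = g b) : r a' b' := by
  by_contra h'
  have hb'a' : r b' a' := (total_of r a' b').resolve_left h'
  rcases total_of r a b' with hab' | hb'a
  · exact hne (hb ▸ h hab' hb'a' ha.symm).symm
  · exact hne ((h hb'a hab hb).trans hb)

theorem pairwise_mapIdx [Std.Total r] (h : FibersOrdConnected r g) {l : List α}
    (hl : l.Pairwise fun a b => r a b ∧ g a ≠ g b) {f : ℕ → α → α} (hf : ∀ p a, g (f p a) = g a) :
    (l.mapIdx f).Pairwise fun a b => r a b ∧ g a ≠ g b := by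
  rw [List.pairwise_iff_getElem] at hl ⊢
  intro p q hp hq hpq
  simp only [List.getElem_mapIdx, hf]
  rw [List.length_mapIdx] at hp hq
  obtain ⟨hr, hne⟩ := hl p q hp hq hpq
  exact ⟨h.rel_of_ne hr hne (hf _ _) (hf _ _), hne⟩

end FibersOrdConnected

theorem IsRecursiveOrder.fibersOrdConnected {c : ℕ} {N : Fin c → ℕ}
    {le : (∀ k : Fin c, Fin (N k)) → (∀ k : Fin c, Fin (N k)) → Prop} (h : IsRecursiveOrder N le)
    {i : Fin c} (hi : (i : ℕ) = 0) : FibersOrdConnected le (· i) :=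
  fun a b d hab hbd had =>
    h 1 a b d hab hbd (fun k hk => by rwa [show k = i from Fin.ext (by omega)]) i (by omega)

section Runs

variable {c : ℕ} {N : Fin c → ℕ}

@[simp]
theorem runsCol_nil (i : Fin c) : runsCol i ([] : List (∀ k : Fin c, Fin (N k))) = 0 := rfl

@[simp]
theorem runsCol_singleton (i : Fin c) (a : ∀ k : Fin c, Fin (N k)) : runsCol i [a] = 1 := rfl

theorem runsCol_cons_cons (i : Fin c) (a b : ∀ k : Fin c, Fin (N k)) (l : List (∀ k, Fin (N k))) :
    runsCol i (a :: b :: l) = runsCol i (b :: l) + if a i = b i then 0 else 1 := by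
  by_cases h : a i = b i <;> simp [runsCol, h, add_assoc]

theorem runsCol_le_length (i : Fin c) : ∀ l : List (∀ k : Fin c, Fin (N k)), runsCol i l ≤ l.length
  | [] | [_] => by simp
  | a :: b :: l => by
    have := runsCol_le_length i (b :: l)
    rw [runsCol_cons_cons]
    simp only [List.length_cons] at this ⊢
    split <;> omega

theorem runsCol_eq_length (i : Fin c) :
    ∀ l : List (∀ k : Fin c, Fin (N k)), l.IsChain (fun a b => a i ≠ b i) → runsCol i l = l.length
  | [], _ | [_], _ => by simp
  | a :: b :: l, h => by
    rw [List.isChain_cons_cons] at h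
    rw [runsCol_cons_cons, runsCol_eq_length i (b :: l) h.2, if_neg h.1]
    rfl

theorem runsCol_le_runsCol (i j : Fin c) :
    ∀ l : List (∀ k : Fin c, Fin (N k)), (∀ a ∈ l, ∀ b ∈ l, a j = b j → a i = b i) →
      runsCol i l ≤ runsCol j l
  | [], _ | [_], _ => by simp
  | a :: b :: l, h => by
    have ih := runsCol_le_runsCol i j (b :: l) fun x hx y hy => h x (by simp [hx]) y (by simp [hy])
    have hab : a j = b j → a i = b i := h a (by simp) b (by simp)
    rw [runsCol_cons_cons, runsCol_cons_cons]
    by_cases hj : a j = b j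
    · simp only [hab hj, hj, if_true]
      omega
    · split_ifs <;> omega

/-- Each value of column `i` forms a single run. -/
theorem runsCol_le_card {le : (∀ k : Fin c, Fin (N k)) → (∀ k : Fin c, Fin (N k)) → Prop}
    (i : Fin c) (hle : FibersOrdConnected le (· i)) :
    ∀ l : List (∀ k : Fin c, Fin (N k)), l.Pairwise le →
      runsCol i l ≤ (l.map (· i)).toFinset.card
  | [], _ | [_], _ => by simp
  | a :: b :: l, h => by
    have ih := runsCol_le_card i hle (b :: l) h.of_cons
    rw [runsCol_cons_cons, List.map_cons, List.toFinset_cons]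
    split_ifs with hab
    · rwa [Finset.insert_eq_of_mem (by simp [hab]), add_zero]
    · have hnot : a i ∉ ((b :: l).map (· i)).toFinset := by
        simp only [List.mem_toFinset, List.mem_map, List.mem_cons]
        rintro ⟨d, hd | hd, hda⟩
        · exact hab (hd ▸ hda).symm
        · rw [List.pairwise_cons, List.pairwise_cons] at h
          exact hab (hle (h.1 b (by simp)) (h.2.1 d hd) hda.symm).symm
      rw [Finset.card_insert_of_notMem hnot]
      omega

theorem runCount_eq_mul (l : List (∀ k : Fin c, Fin (N k))) (m : ℕ)
    (h : ∀ i, runsCol i l = m) : runCount l = c * m := by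
  simp [runCount, h]

theorem runCount_le (l : List (∀ k : Fin c, Fin (N k))) (j : Fin c) (B : ℕ)
    (h : ∀ i ≠ j, runsCol i l ≤ B) : runCount l ≤ l.length + (c - 1) * B := by
  rw [runCount, ← Finset.add_sum_erase _ _ (Finset.mem_univ j)]
  have hrest := Finset.sum_le_card_nsmul (Finset.univ.erase j) (runsCol · l) B
    fun i hi => h i (Finset.ne_of_mem_erase hi)
  rw [Finset.card_erase_of_mem (Finset.mem_univ j), Finset.card_univ, Fintype.card_fin,
    smul_eq_mul] at hrest
  exact add_le_add (runsCol_le_length j l) hrest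

theorem runCount_le_of_copies {le : (∀ k : Fin c, Fin (N k)) → (∀ k : Fin c, Fin (N k)) → Prop}
    (j jₗ : Fin c) (hle : FibersOrdConnected le (· j)) (l : List (∀ k : Fin c, Fin (N k)))
    (hl : l.Pairwise le) (hcopy : ∀ a ∈ l, ∀ i ≠ jₗ, (a i : ℕ) = a j) :
    runCount l ≤ l.length + (c - 1) * N j := by
  refine runCount_le l jₗ _ fun i hi => ?_
  calc runsCol i l ≤ runsCol j l :=
        runsCol_le_runsCol i j l fun a ha b hb hab =>
          Fin.ext (by rw [hcopy a ha i hi, hcopy b hb i hi, hab])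
    _ ≤ _ := runsCol_le_card j hle l hl
    _ ≤ N j := (Finset.card_le_univ _).trans (Fintype.card_fin _).le

end Runs

section Table

variable {c : ℕ} {N : Fin c → ℕ} (i₀ : Fin c) (hN : ∀ k ≠ i₀, 2 ≤ N k)

def parityRow (u : Fin (N i₀)) (p : ℕ) : ∀ k : Fin c, Fin (N k) := fun k =>
  if h : k = i₀ then h ▸ u else ⟨p % 2, by have := hN k h; omega⟩

@[simp]
theorem parityRow_self (u : Fin (N i₀)) (p : ℕ) : parityRow i₀ hN u p i₀ = u := by
  simp [parityRow]

theorem val_parityRow_of_ne (u : Fin (N i₀)) (p : ℕ) {k : Fin c} (hk : k ≠ i₀) :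
    (parityRow i₀ hN u p k : ℕ) = p % 2 := by
  simp [parityRow, hk]

variable (le : (∀ k : Fin c, Fin (N k)) → (∀ k : Fin c, Fin (N k)) → Prop) [DecidableRel le]
  [IsLinearOrder _ le]

def sortedParityRows : List (∀ k : Fin c, Fin (N k)) :=
  ((Finset.univ.image fun u => parityRow i₀ hN u 0).sort le).mapIdx
    fun p t => parityRow i₀ hN (t i₀) p

theorem length_sortedParityRows : (sortedParityRows i₀ hN le).length = N i₀ := by
  rw [sortedParityRows, List.length_mapIdx, Finset.length_sort,
    Finset.card_image_of_injective _ fun u v h => by simpa using congrFun h i₀,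
    Finset.card_univ, Fintype.card_fin]

variable {le}

theorem val_getElem_sortedParityRows {k : Fin c} (hk : k ≠ i₀) {p : ℕ}
    (hp : p < (sortedParityRows i₀ hN le).length) :
    ((sortedParityRows i₀ hN le)[p] k : ℕ) = p % 2 := by
  have h : (sortedParityRows i₀ hN le)[p] = _ := List.getElem_mapIdx
  rw [h]
  exact val_parityRow_of_ne i₀ hN _ _ hk

theorem pairwise_sortedParityRows (hle : FibersOrdConnected le (· i₀)) :
    (sortedParityRows i₀ hN le).Pairwise fun a b => le a b ∧ a i₀ ≠ b i₀ := by
  refine hle.pairwise_mapIdx ?_ fun p t => parityRow_self i₀ hN _ p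
  refine ((Finset.pairwise_sort _ le).and (Finset.sort_nodup _ le)).imp_of_mem ?_
  intro a b ha hb ⟨hab, hne⟩
  simp only [Finset.mem_sort, Finset.mem_image, Finset.mem_univ, true_and] at ha hb
  obtain ⟨u, rfl⟩ := ha
  obtain ⟨v, rfl⟩ := hb
  refine ⟨hab, fun huv => hne ?_⟩
  simp only [parityRow_self] at huv
  rw [huv]

theorem isChain_sortedParityRows (hle : FibersOrdConnected le (· i₀)) (k : Fin c) :
    (sortedParityRows i₀ hN le).IsChain fun a b => a k ≠ b k := by
  by_cases hk : k = i₀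
  · subst hk
    exact (pairwise_sortedParityRows k hN hle).isChain.imp fun {_ _} h => h.2
  · refine List.isChain_iff_getElem.mpr fun p hp => ?_
    intro h
    have := congrArg Fin.val h
    rw [val_getElem_sortedParityRows i₀ hN hk, val_getElem_sortedParityRows i₀ hN hk] at this
    omega

theorem val_eq_of_mem_sortedParityRows {t : ∀ k : Fin c, Fin (N k)}
    (ht : t ∈ sortedParityRows i₀ hN le) {i k : Fin c} (hi : i ≠ i₀) (hk : k ≠ i₀) :
    (t i : ℕ) = t k := by
  obtain ⟨p, -, rfl⟩ := List.mem_mapIdx.mp ht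
  rw [val_parityRow_of_ne i₀ hN _ _ hi, val_parityRow_of_ne i₀ hN _ _ hk]

end Table

theorem exists_table_runsCol_eq {c : ℕ} {N : Fin c → ℕ} (i₀ : Fin c) (hN : ∀ k ≠ i₀, 2 ≤ N k)
    {le : (∀ k : Fin c, Fin (N k)) → (∀ k : Fin c, Fin (N k)) → Prop} [IsLinearOrder _ le]
    (hle : FibersOrdConnected le (· i₀)) :
    ∃ T : Finset (∀ k : Fin c, Fin (N k)), T.card = N i₀ ∧
      (∀ t ∈ T, ∀ i ≠ i₀, ∀ k ≠ i₀, (t i : ℕ) = t k) ∧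
      ∀ l : List (∀ k : Fin c, Fin (N k)), l.Pairwise le → l.Nodup → (∀ x, x ∈ l ↔ x ∈ T) →
        ∀ i, runsCol i l = N i₀ := by
  classical
  set rows := sortedParityRows i₀ hN le
  have hrows := pairwise_sortedParityRows i₀ hN hle
  have hnodup : rows.Nodup := hrows.imp fun h heq => h.2 (congrArg (· i₀) heq)
  refine ⟨rows.toFinset, ?_, fun t ht => ?_, fun l hl hnl hmem i => ?_⟩
  · rw [List.toFinset_card_of_nodup hnodup, length_sortedParityRows]
  · exact fun i hi k hk => val_eq_of_mem_sortedParityRows i₀ hN (List.mem_toFinset.mp ht) hi hk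
  · have hperm : l.Perm rows :=
      (List.perm_ext_iff_of_nodup hnl hnodup).mpr fun x => by rw [hmem, List.mem_toFinset]
    rw [hperm.eq_of_pairwise' hl (hrows.imp And.left),
      runsCol_eq_length i _ (isChain_sortedParityRows i₀ hN hle i), length_sortedParityRows]

theorem injective_pi_comp_of_surjective {ι : Type*} {β : ι → Type*} {f : ι → ι}
    (hf : Function.Surjective f) : Function.Injective fun (t : ∀ i, β i) i => t (f i) := by
  intro s t h
  funext i
  obtain ⟨j, rfl⟩ := hf i
  exact congrFun h j

theorem runCount_perm_le {c : ℕ} {N : Fin c → ℕ} (T : Finset (∀ k : Fin c, Fin (N k)))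
    {i₀ : Fin c} (hT : ∀ t ∈ T, ∀ i ≠ i₀, ∀ k ≠ i₀, (t i : ℕ) = t k) {σ : Equiv.Perm (Fin c)}
    (hσ : σ i₀ ≠ i₀)
    {le' : (∀ k : Fin c, Fin (N (σ k))) → (∀ k : Fin c, Fin (N (σ k))) → Prop}
    (hle' : FibersOrdConnected le' (· i₀)) (l' : List (∀ k : Fin c, Fin (N (σ k))))
    (hl' : l'.Pairwise le') (hnl' : l'.Nodup)
    (hmem' : ∀ x, x ∈ l' ↔ ∃ t ∈ T, (fun k => t (σ k)) = x) :
    runCount l' ≤ T.card + (c - 1) * N (σ i₀) := by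
  have hlen' : l'.length = T.card := by
    have : l'.toFinset = T.image fun t k => t (σ k) := by ext; simp [hmem']
    rw [← List.toFinset_card_of_nodup hnl', this,
      Finset.card_image_of_injective _
        (injective_pi_comp_of_surjective (β := fun k => Fin (N k)) σ.surjective)]
  have hcopy : ∀ a ∈ l', ∀ i ≠ σ.symm i₀, (a i : ℕ) = a i₀ := by
    intro a ha i hi
    obtain ⟨t, ht, rfl⟩ := (hmem' a).mp ha
    exact hT t ht (σ i) (fun h => hi (σ.eq_symm_apply.mpr h)) (σ i₀) hσ
  simpa only [hlen'] using runCount_le_of_copies i₀ (σ.symm i₀) hle' l' hl' hcopy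

theorem sub_mul_le_mul_of_le_add {c ε n R : ℝ} (hε : 0 < ε) (hc : 1 ≤ c) (hR₀ : 0 ≤ R)
    (hR : R ≤ n + (c - 1) * 2) (hn : 2 * c * (c - 1) / ε ≤ n) : (c - ε) * R ≤ c * n := by
  rw [div_le_iff₀ hε] at hn
  have hεc : 0 ≤ ε * (c - 1) := mul_nonneg hε.le (by linarith)
  have hn₀ : 0 ≤ n := le_of_mul_le_mul_right (by nlinarith : 0 * ε ≤ n * ε) hε
  rcases le_or_gt (c - ε) 0 with h | h
  · nlinarith [mul_nonpos_of_nonpos_of_nonneg h hR₀, mul_nonneg (by linarith : 0 ≤ c) hn₀]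
  · nlinarith [mul_le_mul_of_nonneg_left hR h.le]

/-- For every `c ≥ 2` and `ε > 0`, for all large enough `n`: for every recursive
order on the tuple space `{1,…,n} × {0,1}^{c−1}`, there is a table `T` of `n`
distinct tuples and a permutation `σ` of the columns such that every recursive
order on the `σ`-permuted tuple space sorts `σ(T)` with at least `(c − ε)` times
fewer runs: the RunCount after any recursive order can vary by a factor
arbitrarily close to `c` under permutation of the columns. -/
theorem recursive_order_runCount_varies_by_factor_c
    (c : ℕ) (hc : 2 ≤ c) (ε : ℝ) (hε : 0 < ε) :
    ∃ n₀ : ℕ, ∀ n : ℕ, n₀ ≤ n → ∀ N : Fin c → ℕ,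
      (∀ i : Fin c, (i : ℕ) = 0 → N i = n) →
      (∀ i : Fin c, (i : ℕ) ≠ 0 → N i = 2) →
      ∀ le : (∀ k : Fin c, Fin (N k)) → (∀ k : Fin c, Fin (N k)) → Prop,
        IsLinearOrder _ le → IsRecursiveOrder N le →
        ∃ (T : Finset (∀ k : Fin c, Fin (N k))) (σ : Equiv.Perm (Fin c)),
          T.card = n ∧
          ∀ le' : (∀ k : Fin c, Fin (N (σ k))) → (∀ k : Fin c, Fin (N (σ k))) → Prop,
            IsLinearOrder _ le' → IsRecursiveOrder (fun k => N (σ k)) le' →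
            ∀ (l : List (∀ k : Fin c, Fin (N k)))
              (l' : List (∀ k : Fin c, Fin (N (σ k)))),
              l.Pairwise le → l.Nodup → (∀ x, x ∈ l ↔ x ∈ T) →
              l'.Pairwise le' → l'.Nodup →
              (∀ x, x ∈ l' ↔ ∃ t ∈ T, (fun k => t (σ k)) = x) →
              ((c : ℝ) - ε) * (runCount l' : ℝ) ≤ (runCount l : ℝ) := by
  have hc₀ : 0 < c := by omega
  set i₀ : Fin c := ⟨0, hc₀⟩
  set iₗ : Fin c := ⟨c - 1, by omega⟩
  have hiₗ : iₗ ≠ i₀ := fun h => by simp [i₀, iₗ, Fin.ext_iff] at h; omega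
  refine ⟨⌈2 * c * (c - 1) / ε⌉₊, fun n hn N h0 h1 le _ hrec => ?_⟩
  have hN : ∀ k ≠ i₀, 2 ≤ N k := fun k hk => (h1 k fun h => hk (Fin.ext h)).ge
  obtain ⟨T, hTcard, hTcopy, hruns⟩ := exists_table_runsCol_eq i₀ hN (hrec.fibersOrdConnected rfl)
  rw [h0 i₀ rfl] at hTcard hruns
  refine ⟨T, Equiv.swap i₀ iₗ, hTcard, fun le' _ hrec' l l' hl hnl hmem hl' hnl' hmem' => ?_⟩
  have hrun' := runCount_perm_le T hTcopy (by rwa [Equiv.swap_apply_left])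
    (hrec'.fibersOrdConnected rfl) l' hl' hnl' hmem'
  rw [hTcard, Equiv.swap_apply_left, h1 iₗ (by simp [iₗ]; omega)] at hrun'
  rw [runCount_eq_mul l n (hruns l hl hnl hmem)]
  have hrun'ℝ : (runCount l' : ℝ) ≤ n + (c - 1) * 2 := by
    rw [← Nat.cast_pred hc₀]
    exact_mod_cast hrun'
  push_cast
  exact sub_mul_le_mul_of_le_add hε (by exact_mod_cast hc₀) (Nat.cast_nonneg _) hrun'ℝ
    (Nat.ceil_le.mp hn)
end

section
/- There exists a set T of 13 pairwise-distinct 2-tuples such that: (i) some ordering of the rows of T has RunCount equal to 14 (which equals n + c − 1 with n = 13 rows and c = 2 columns, the minimum possible for distinct rows), and (ii) for each of the two possible orderings of the columns and every recursive order ⪯ on the corresponding tuple space, the ⪯-sorted list of T (respectively of the column-swapped table) has RunCount strictly greater than 14. That is, there are tables for which no recursive order minimizes the number of runs, even after reordering the columns. -/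
namespace List

variable {α β : Type*}

def ContiguousFibers (f : α → β) (l : List α) : Prop :=
  ∀ i j k (hij : i < j) (hjk : j < k) (hk : k < l.length), f l[i] = f l[k] → f l[j] = f l[i]

namespace ContiguousFibers

variable {f : α → β} {a b : α} {l : List α}

theorem tail (h : (a :: l).ContiguousFibers f) : l.ContiguousFibers f :=
  fun i j k hij hjk hk => h (i + 1) (j + 1) (k + 1) (by omega) (by omega) (by simpa using hk)

theorem eq_or_forall_ne (h : (a :: b :: l).ContiguousFibers f) :
    f a = f b ∨ ∀ x ∈ b :: l, f x ≠ f a := by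
  refine or_iff_not_imp_left.2 fun hab x hx hxa => ?_
  obtain ⟨k, hk, rfl⟩ := List.getElem_of_mem hx
  rcases k with _ | k
  · exact hab hxa.symm
  · exact hab (h 0 1 (k + 2) (by omega) (by omega) (by simpa using hk) hxa.symm).symm

end ContiguousFibers

end List

section Search

variable {α β : Type*} [DecidableEq α] [DecidableEq β]

def contiguousPaths (r : α → α → Prop) [DecidableRel r] (f : α → β) (M : List α) :
    ℕ → List (List α)
  | 0 => M.map ([·])
  | n + 1 => (contiguousPaths r f M n).flatMap fun p =>
      (M.filter fun a =>
        decide (a ∉ p ∧ ∀ b ∈ p.head?, r a b ∧ (f a = f b ∨ ∀ x ∈ p, f x ≠ f a))).map (· :: p)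

theorem mem_contiguousPaths {r : α → α → Prop} [DecidableRel r] {f : α → β} {M : List α} :
    ∀ {n : ℕ} {l : List α}, l.length = n + 1 → l.Nodup → (∀ x ∈ l, x ∈ M) → l.IsChain r →
      l.ContiguousFibers f → l ∈ contiguousPaths r f M n
  | 0, l, hlen, _, hM, _, _ => by
    obtain ⟨a, rfl⟩ := List.length_eq_one_iff.1 hlen
    exact List.mem_map.2 ⟨a, hM a (List.mem_singleton_self a), rfl⟩
  | n + 1, a :: b :: t, hlen, hnd, hM, hr, hf => by
    have htail : b :: t ∈ contiguousPaths r f M n :=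
      mem_contiguousPaths (by simpa using hlen) hnd.of_cons
        (fun x hx => hM x (List.mem_cons_of_mem a hx)) (List.isChain_cons_cons.1 hr).2 hf.tail
    refine List.mem_flatMap.2 ⟨b :: t, htail, List.mem_map.2 ⟨a, List.mem_filter.2 ⟨?_, ?_⟩, rfl⟩⟩
    · exact hM a List.mem_cons_self
    · refine decide_eq_true ⟨(List.nodup_cons.1 hnd).1, fun _ hb => ?_⟩
      cases hb
      exact ⟨(List.isChain_cons_cons.1 hr).1, hf.eq_or_forall_ne⟩

end Search

section Runs

variable {c : ℕ} {N : Fin c → ℕ}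

theorem runCount_singleton (a : ∀ k, Fin (N k)) : runCount [a] = c := by
  simp [runCount, runsCol]

theorem runCount_cons_cons (a b : ∀ k, Fin (N k)) (l : List (∀ k, Fin (N k))) :
    runCount (a :: b :: l) = runCount (b :: l) + hammingDist a b := by
  simp only [runCount, runsCol, List.zip_cons_cons, List.countP_cons, hammingDist,
    Finset.card_filter, ← Finset.sum_add_distrib, decide_eq_true_eq, add_assoc]

theorem length_add_le_runCount_add_one :
    ∀ {l : List (∀ k, Fin (N k))}, l ≠ [] → l.IsChain (· ≠ ·) → l.length + c ≤ runCount l + 1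
  | [a], _, _ => by simp [runCount_singleton, add_comm]
  | a :: b :: l, _, hl => by
    have hab : 0 < hammingDist a b := hammingDist_pos.2 (List.isChain_cons_cons.1 hl).1
    have := length_add_le_runCount_add_one (List.cons_ne_nil b l) (List.isChain_cons_cons.1 hl).2
    simp only [List.length_cons, runCount_cons_cons] at this ⊢
    omega

theorem isChain_hammingDist_eq_one_of_runCount_le :
    ∀ {l : List (∀ k, Fin (N k))}, l.IsChain (· ≠ ·) → runCount l + 1 ≤ l.length + c →
      l.IsChain (hammingDist · · = 1)
  | [], _, _ => List.isChain_nil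
  | [a], _, _ => List.isChain_singleton a
  | a :: b :: l, hl, hrun => by
    have hab : 0 < hammingDist a b := hammingDist_pos.2 (List.isChain_cons_cons.1 hl).1
    have := length_add_le_runCount_add_one (List.cons_ne_nil b l) (List.isChain_cons_cons.1 hl).2
    simp only [List.length_cons, runCount_cons_cons] at this hrun
    exact List.isChain_cons_cons.2
      ⟨by omega, isChain_hammingDist_eq_one_of_runCount_le (List.isChain_cons_cons.1 hl).2
        (by simp only [List.length_cons]; omega)⟩

end Runs

theorem IsRecursiveOrder.contiguousFibers_apply_zero {c : ℕ} {N : Fin (c + 1) → ℕ}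
    {le : (∀ k, Fin (N k)) → (∀ k, Fin (N k)) → Prop} (hrec : IsRecursiveOrder N le)
    {l : List (∀ k, Fin (N k))} (hl : l.Pairwise le) : l.ContiguousFibers (· 0) := by
  intro i j k hij hjk hk he
  rw [List.pairwise_iff_getElem] at hl
  refine hrec 1 _ _ _ (hl i j _ _ hij) (hl j k _ hk hjk) (fun p hp => ?_) 0 Nat.one_pos
  obtain rfl : p = 0 := Fin.ext (by simpa using hp)
  exact he

theorem lt_runCount_of_contiguousPaths_eq_nil {c n : ℕ} {N : Fin (c + 1) → ℕ}
    {M l : List (∀ k, Fin (N k))}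
    (hpaths : contiguousPaths (hammingDist · · = 1) (· 0) M n = []) (hlen : l.length = n + 1)
    (hl : l.Nodup) (hM : ∀ x ∈ l, x ∈ M) (hf : l.ContiguousFibers (· 0)) :
    n + c + 1 < runCount l := by
  by_contra! hrun
  have hrook := isChain_hammingDist_eq_one_of_runCount_le hl.isChain (by omega)
  simpa [hpaths] using mem_contiguousPaths hlen hl hM hrook hf

def table : List (Fin 2 → Fin 6) :=
  [![0, 0], ![0, 2], ![0, 4], ![1, 2], ![1, 5], ![2, 4], ![2, 5],
   ![3, 1], ![4, 3], ![4, 5], ![5, 0], ![5, 1], ![5, 2]]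

def rookTour : List (Fin 2 → Fin 6) :=
  [![3, 1], ![5, 1], ![5, 0], ![5, 2], ![1, 2], ![0, 2], ![0, 0],
   ![0, 4], ![2, 4], ![2, 5], ![1, 5], ![4, 5], ![4, 3]]

set_option maxHeartbeats 2000000 in
theorem contiguousPaths_table_eq_nil (σ : Equiv.Perm (Fin 2)) :
    contiguousPaths (hammingDist · · = 1) (· 0) (table.map fun t k => t (σ k)) 12 = [] := by
  revert σ
  decide

/-- There is a table of 13 pairwise-distinct 2-tuples some ordering of whose rows
has RunCount `14 = n + c − 1` (the minimum possible for distinct rows), yet for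
both orderings of the columns, every recursive order sorts the table with
RunCount strictly greater than 14: no recursive order minimizes the number of
runs, even after reordering the columns. -/
theorem exists_table_no_recursive_order_optimal :
    ∃ (N : Fin 2 → ℕ) (T : Finset (∀ k : Fin 2, Fin (N k))),
      T.card = 13 ∧
      (∃ l : List (∀ k : Fin 2, Fin (N k)),
        l.Nodup ∧ (∀ x, x ∈ l ↔ x ∈ T) ∧ runCount l = 14) ∧
      (∀ (σ : Equiv.Perm (Fin 2))
         (le : (∀ k : Fin 2, Fin (N (σ k))) → (∀ k : Fin 2, Fin (N (σ k))) → Prop),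
         IsLinearOrder _ le → IsRecursiveOrder (fun k => N (σ k)) le →
         ∀ l : List (∀ k : Fin 2, Fin (N (σ k))),
           l.Pairwise le → l.Nodup →
           (∀ x, x ∈ l ↔ ∃ t ∈ T, (fun k => t (σ k)) = x) →
           14 < runCount l) := by
  refine ⟨fun _ => 6, table.toFinset, by decide, ⟨rookTour, by decide, by decide, by decide⟩, ?_⟩
  intro σ le _ hrec l hsorted hl hmem
  have hmem' : ∀ x, x ∈ l ↔ x ∈ table.map fun t k => t (σ k) := by simpa using hmem
  have hperm : l.Perm (table.map fun t k => t (σ k)) :=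
    (List.perm_ext_iff_of_nodup hl ((by decide : table.Nodup).map
      σ.surjective.injective_comp_right)).2 hmem'
  exact lt_runCount_of_contiguousPaths_eq_nil (contiguousPaths_table_eq_nil σ)
    (by simpa [table] using hperm.length_eq) hl (fun x hx => (hmem' x).1 hx)
    (hrec.contiguousFibers_apply_zero hsorted)
end

section
/- Let T be a set of n ≥ 1 distinct tuples in ∏_{i=1}^c {1,…,N_i} and let ⪯ be any recursive order on this tuple space. Then in the ⪯-sorted list of T, the number of runs in column j is at most min(n, ∏_{i=1}^j N_i) for every j; consequently the RunCount of the ⪯-sorted list of T is at most μ times the minimum RunCount over all orderings of the rows of T, where μ = (∑_{j=1}^c min(n, ∏_{i=1}^j N_i)) / (n + c − 1). That is, recursive ordering is μ-optimal for the problem of minimizing the number of runs. -/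
/-!
In a recursive order the rows sharing a given prefix of length `j + 1` are consecutive, so
column `j` of the sorted list has at most one run per such prefix, and trivially at most one run
per row; summing over the columns bounds the RunCount of the sorted list by
`∑_j min (n, ∏_{i≤j} N_i)`. Conversely, any ordering of `n` distinct rows has `c` initial runs
and each of its `n - 1` row changes opens a new run in at least one column, so its RunCount is
at least `n + c - 1`.
-/

theorem List.Pairwise.rel_of_mem_zip_tail {α : Type*} {R : α → α → Prop} :
    ∀ {l : List α}, l.Pairwise R → ∀ {x y : α}, (x, y) ∈ l.zip l.tail → R x y
  | [], _, _, _, h => by simp at h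
  | [_], _, _, _, h => by simp at h
  | a :: b :: t, hl, x, y, h => by
    rw [List.tail_cons, List.zip_cons_cons, List.mem_cons] at h
    rcases h with h | h
    · obtain ⟨rfl, rfl⟩ := Prod.mk.inj h
      exact List.rel_of_pairwise_cons hl List.mem_cons_self
    · exact hl.of_cons.rel_of_mem_zip_tail h

theorem List.length_le_sum_countP {ι α : Type*} (s : Finset ι) (p : ι → α → Bool)
    {m : List α} (hm : ∀ x ∈ m, ∃ i ∈ s, p i x) : m.length ≤ ∑ i ∈ s, m.countP (p i) := by
  induction m with
  | nil => simp
  | cons a t ih =>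
    obtain ⟨i, hi, hpi⟩ := hm a List.mem_cons_self
    have ht := ih fun x hx => hm x (List.mem_cons_of_mem a hx)
    have ha : 1 ≤ ∑ i ∈ s, if p i a then 1 else 0 :=
      le_of_eq_of_le (by simp [hpi]) (Finset.single_le_sum (fun _ _ => Nat.zero_le _) hi)
    simp only [List.countP_cons, Finset.sum_add_distrib, List.length_cons]
    omega

section runsBy

variable {α β γ : Type*} [DecidableEq β] [DecidableEq γ]

def runsBy (g : α → β) : List α → ℕ
  | [] => 0
  | a :: l => 1 + ((a :: l).zip l).countP (fun ab => decide (g ab.1 ≠ g ab.2))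

theorem runsBy_cons_cons (g : α → β) (a b : α) (l : List α) :
    runsBy g (a :: b :: l) = runsBy g (b :: l) + if g a = g b then 0 else 1 := by
  simp only [runsBy, List.zip_cons_cons, List.countP_cons, decide_not, Bool.not_eq_true',
    decide_eq_false_iff_not]
  split_ifs <;> omega

theorem runsBy_le_length (g : α → β) : ∀ l : List α, runsBy g l ≤ l.length
  | [] => le_rfl
  | a :: l => by
    have : ((a :: l).zip l).length = l.length := by simp
    simpa [runsBy, Nat.add_comm 1] using (List.countP_le_length).trans this.le

theorem runsBy_mono {g : α → β} {h : α → γ} (hgh : ∀ x y, h x = h y → g x = g y) :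
    ∀ l : List α, runsBy g l ≤ runsBy h l
  | [] => le_rfl
  | _ :: _ => by
    refine Nat.add_le_add_left (List.countP_mono_left fun ab _ hab => ?_) 1
    simp only [decide_eq_true_eq] at hab ⊢
    exact fun hh => hab (hgh _ _ hh)

/-- Convex fibres make each value of `g` a single run of an `r`-sorted list. -/
theorem runsBy_le_card_toFinset {r : α → α → Prop} {g : α → β}
    (hconv : ∀ x y z, r x y → r y z → g x = g z → g y = g x) :
    ∀ {l : List α}, l.Pairwise r → runsBy g l ≤ (l.map g).toFinset.card
  | [], _ => le_rfl
  | [_], _ => by simp [runsBy]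
  | a :: b :: l, hl => by
    have ih := runsBy_le_card_toFinset hconv hl.of_cons
    rw [runsBy_cons_cons, List.map_cons, List.toFinset_cons]
    by_cases hab : g a = g b
    · rw [if_pos hab, add_zero]
      exact ih.trans (Finset.card_le_card (Finset.subset_insert _ _))
    · have hnotin : g a ∉ ((b :: l).map g).toFinset := by
        simp only [List.mem_toFinset, List.mem_map, List.mem_cons]
        rintro ⟨x, rfl | hx, hxa⟩
        · exact hab hxa.symm
        · exact hab (hconv a b x (List.rel_of_pairwise_cons hl List.mem_cons_self)
            (List.rel_of_pairwise_cons hl.of_cons hx) hxa.symm).symm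
      rw [Finset.card_insert_of_notMem hnotin, if_neg hab]
      exact Nat.add_le_add_right ih 1

end runsBy

variable {c : ℕ} {N : Fin c → ℕ}

theorem runsCol_eq_runsBy (j : Fin c) (l : List (∀ k : Fin c, Fin (N k))) :
    runsCol j l = runsBy (fun t => t j) l := by
  cases l <;> rfl

theorem runsCol_le_prod_of_isRecursiveOrder
    {le : (∀ k : Fin c, Fin (N k)) → (∀ k : Fin c, Fin (N k)) → Prop}
    (hrec : IsRecursiveOrder N le) {l : List (∀ k : Fin c, Fin (N k))} (hs : l.Pairwise le)
    (j : Fin c) : runsCol j l ≤ ∏ i ∈ Finset.Iic j, N i := by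
  have hconv : ∀ x y z, le x y → le y z → (Finset.Iic j).restrict x = (Finset.Iic j).restrict z →
      (Finset.Iic j).restrict y = (Finset.Iic j).restrict x := by
    intro x y z hxy hyz hxz
    have hagree := hrec (j + 1) x y z hxy hyz fun i hi =>
      congrFun hxz ⟨i, Finset.mem_Iic.mpr (Fin.le_def.mpr (Nat.lt_succ_iff.mp hi))⟩
    funext ⟨i, hi⟩
    exact hagree i (Nat.lt_succ_of_le (Fin.le_def.mp (Finset.mem_Iic.mp hi)))
  calc runsCol j l
      ≤ runsBy (Finset.Iic j).restrict l := by
        rw [runsCol_eq_runsBy]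
        exact runsBy_mono (fun x y hxy => congrFun hxy ⟨j, Finset.mem_Iic.mpr le_rfl⟩) l
    _ ≤ (l.map (Finset.Iic j).restrict).toFinset.card := runsBy_le_card_toFinset hconv hs
    _ ≤ Fintype.card (∀ i : Finset.Iic j, Fin (N i)) := Finset.card_le_univ _
    _ = ∏ i ∈ Finset.Iic j, N i := by
        simp only [Fintype.card_pi, Fintype.card_fin]
        exact Finset.prod_coe_sort _ _

theorem length_add_le_runCount {l : List (∀ k : Fin c, Fin (N k))} (hl : l ≠ [])
    (hnd : l.Nodup) : l.length + c ≤ runCount l + 1 := by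
  obtain ⟨a, t, rfl⟩ := List.exists_cons_of_ne_nil hl
  have hpairs : t.length ≤ ∑ i : Fin c,
      ((a :: t).zip t).countP (fun ab => decide (ab.1 i ≠ ab.2 i)) := by
    rw [← show ((a :: t).zip t).length = t.length by simp]
    refine List.length_le_sum_countP _ _ fun ab hab => ?_
    obtain ⟨i, hi⟩ := Function.ne_iff.mp (List.Pairwise.rel_of_mem_zip_tail hnd hab)
    exact ⟨i, Finset.mem_univ i, by simpa using hi⟩
  have hrun : runCount (a :: t) = c + ∑ i : Fin c,
      ((a :: t).zip t).countP (fun ab => decide (ab.1 i ≠ ab.2 i)) := by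
    simp [runCount, runsCol, Finset.sum_add_distrib]
  simp only [List.length_cons]
  omega

theorem le_div_mul_of_le_of_le {x s d r : ℝ} (hxs : x ≤ s) (hs : 0 ≤ s) (hd : 0 < d)
    (hdr : d ≤ r) : x ≤ s / d * r :=
  calc x ≤ s := hxs
    _ = s / d * d := (div_mul_cancel₀ s hd.ne').symm
    _ ≤ s / d * r := mul_le_mul_of_nonneg_left hdr (div_nonneg hs hd.le)

theorem recursive_order_mu_optimal_general {c : ℕ} {N : Fin c → ℕ}
    (T : Finset (∀ k : Fin c, Fin (N k))) (hT : 1 ≤ T.card)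
    (le : (∀ k : Fin c, Fin (N k)) → (∀ k : Fin c, Fin (N k)) → Prop)
    (hrec : IsRecursiveOrder N le)
    (l : List (∀ k : Fin c, Fin (N k)))
    (hs : l.Pairwise le) (hnd : l.Nodup) (hmem : ∀ x, x ∈ l ↔ x ∈ T) :
    (∀ j : Fin c, runsCol j l ≤ min T.card (∏ i ∈ Finset.Iic j, N i)) ∧
    (∀ l' : List (∀ k : Fin c, Fin (N k)), l'.Nodup → (∀ x, x ∈ l' ↔ x ∈ T) →
      (runCount l : ℝ) ≤
        (((∑ j : Fin c, min T.card (∏ i ∈ Finset.Iic j, N i) : ℕ) : ℝ) /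
            ((T.card : ℝ) + (c : ℝ) - 1)) * (runCount l' : ℝ)) := by
  have hlen : ∀ {m : List (∀ k : Fin c, Fin (N k))}, m.Nodup → (∀ x, x ∈ m ↔ x ∈ T) →
      m.length = T.card := fun hm hmT => by
    rw [← List.toFinset_card_of_nodup hm]; congr 1; ext x; simp [hmT]
  have hcol (j : Fin c) : runsCol j l ≤ min T.card (∏ i ∈ Finset.Iic j, N i) :=
    le_min ((runsCol_eq_runsBy j l ▸ runsBy_le_length _ l).trans (hlen hnd hmem).le)
      (runsCol_le_prod_of_isRecursiveOrder hrec hs j)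
  refine ⟨hcol, fun l' hnd' hmem' => ?_⟩
  have hsum : runCount l ≤ ∑ j : Fin c, min T.card (∏ i ∈ Finset.Iic j, N i) :=
    Finset.sum_le_sum fun j _ => hcol j
  rcases Nat.eq_zero_or_pos c with rfl | hc
  · simp [runCount]
  have hl' : l' ≠ [] := List.ne_nil_of_length_pos ((hlen hnd' hmem').symm ▸ hT)
  have hlower := length_add_le_runCount hl' hnd'
  rw [hlen hnd' hmem'] at hlower
  refine le_div_mul_of_le_of_le (by exact_mod_cast hsum) (Nat.cast_nonneg _) ?_ ?_
  · have : (1 : ℝ) ≤ T.card := by exact_mod_cast hT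
    have : (1 : ℝ) ≤ c := by exact_mod_cast hc
    linarith
  · have : ((T.card + c : ℕ) : ℝ) ≤ (runCount l' + 1 : ℕ) := by exact_mod_cast hlower
    push_cast at this
    linarith

/-- On a table `T` of `n ≥ 1` distinct rows, any recursive order yields at most
`min (n, ∏_{i≤j} N_i)` runs in column `j`, and its RunCount is at most
`μ = (∑_j min (n, ∏_{i≤j} N_i)) / (n + c − 1)` times the RunCount of any
ordering of the rows of `T`: recursive ordering is `μ`-optimal. -/
theorem recursive_order_mu_optimal {c : ℕ} {N : Fin c → ℕ}
    (T : Finset (∀ k : Fin c, Fin (N k))) (hT : 1 ≤ T.card)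
    (le : (∀ k : Fin c, Fin (N k)) → (∀ k : Fin c, Fin (N k)) → Prop)
    (hlin : IsLinearOrder _ le) (hrec : IsRecursiveOrder N le)
    (l : List (∀ k : Fin c, Fin (N k)))
    (hs : l.Pairwise le) (hnd : l.Nodup) (hmem : ∀ x, x ∈ l ↔ x ∈ T) :
    (∀ j : Fin c, runsCol j l ≤ min T.card (∏ i ∈ Finset.Iic j, N i)) ∧
    (∀ l' : List (∀ k : Fin c, Fin (N k)), l'.Nodup → (∀ x, x ∈ l' ↔ x ∈ T) →
      (runCount l : ℝ) ≤
        (((∑ j : Fin c, min T.card (∏ i ∈ Finset.Iic j, N i) : ℕ) : ℝ) /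
            ((T.card : ℝ) + (c : ℝ) - 1)) * (runCount l' : ℝ)) :=
  recursive_order_mu_optimal_general T hT le hrec l hs hnd hmem
end

section
/- Let c ≥ 1, let N_1,…,N_c be integers with N_i ≥ 2 for all i, let n ≥ 1 be an integer, and let m = min_{1≤i≤c} N_i. Then ∑_{j=1}^c min(n, 1 + (N_j − 1)·∏_{i=1}^{j−1} N_i) > ((m − 1)/m) · ∑_{j=1}^c min(n, ∏_{i=1}^{j} N_i). (Equivalently, with μ = (∑_{j=1}^c min(n, ∏_{i≤j} N_i))/(n+c−1) and μ_GC = (∑_{j=1}^c min(n, 1+(N_j−1)∏_{i<j} N_i))/(n+c−1), one has μ_GC > ((m−1)/m)·μ.) -/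
/-!
Compare the two sums column by column. With `Q = ∏_{i<j} N_i`, the recursive term is
`min n (N_j Q)` and the Gray-code term `min n (1 + (N_j - 1) Q)`, and for every `m ≤ N_j`,
`m ≥ 1`, `n ≥ 1` one has `(m - 1) · min n (N_j Q) + 1 ≤ m · min n (1 + (N_j - 1) Q)`:
if the Gray-code term is `n` this is `(m - 1) n + 1 ≤ m n`, and otherwise the difference is
`(m - 1) + (N_j - m) Q ≥ 0`. Summing over the `c ≥ 1` columns gives
`(m - 1) · μ-numerator + c ≤ m · μ_GC-numerator`, which is strict since `c > 0`.
-/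

open Finset

theorem sub_one_mul_min_add_one_le_mul_min {m N n Q : ℕ} (hm : 1 ≤ m) (hmN : m ≤ N)
    (hn : 1 ≤ n) : (m - 1) * min n (N * Q) + 1 ≤ m * min n (1 + (N - 1) * Q) := by
  rcases le_total n (1 + (N - 1) * Q) with hgray | hgray
  · have hrec : (m - 1) * min n (N * Q) ≤ (m - 1) * n :=
      Nat.mul_le_mul_left _ (min_le_left _ _)
    rw [min_eq_left hgray]
    zify [hm] at hrec ⊢
    nlinarith
  · have hrec : (m - 1) * min n (N * Q) ≤ (m - 1) * (N * Q) :=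
      Nat.mul_le_mul_left _ (min_le_right _ _)
    rw [min_eq_right hgray]
    zify [hm, hm.trans hmN] at hrec ⊢
    nlinarith [mul_nonneg (sub_nonneg.2 (Int.ofNat_le.2 hmN)) (Int.natCast_nonneg Q)]

theorem sub_one_mul_sum_min_prod_Iic_add_card_le {ι : Type*} [Fintype ι] [LinearOrder ι]
    [LocallyFiniteOrderBot ι] {N : ι → ℕ} {m n : ℕ} (hm : 1 ≤ m) (hmN : ∀ i, m ≤ N i)
    (hn : 1 ≤ n) :
    (m - 1) * ∑ j, min n (∏ i ∈ Iic j, N i) + Fintype.card ι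
      ≤ m * ∑ j, min n (1 + (N j - 1) * ∏ i ∈ Iio j, N i) := by
  rw [mul_sum, mul_sum, ← card_univ, card_eq_sum_ones, ← sum_add_distrib]
  refine sum_le_sum fun j _ => ?_
  rw [← mul_prod_Iio_eq_prod_Iic]
  exact sub_one_mul_min_add_one_le_mul_min hm (hmN j) hn

/-- With `m = min_i N_i` (all `N_i ≥ 2`), the numerator of the Gray-code
suboptimality bound `μ_GC` is strictly larger than `(m−1)/m` times the numerator
of the recursive-order suboptimality bound `μ`; equivalently,
`μ_GC > ((m−1)/m)·μ`. -/
theorem muGC_gt_mu (c : ℕ) (hc : 1 ≤ c) (N : Fin c → ℕ) (hN : ∀ i, 2 ≤ N i)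
    (n : ℕ) (hn : 1 ≤ n) (m : ℕ) (hm1 : ∃ i, N i = m) (hm2 : ∀ i, m ≤ N i) :
    (((m : ℝ) - 1) / (m : ℝ)) *
        ((∑ j : Fin c, min n (∏ i ∈ Finset.Iic j, N i) : ℕ) : ℝ)
      < ((∑ j : Fin c, min n (1 + (N j - 1) * ∏ i ∈ Finset.Iio j, N i) : ℕ) : ℝ) := by
  obtain ⟨i, rfl⟩ := hm1
  have hm : 1 ≤ N i := one_le_two.trans (hN i)
  have key := sub_one_mul_sum_min_prod_Iic_add_card_le hm hm2 hn
  rw [Fintype.card_fin] at key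
  have hlt : ((N i : ℝ) - 1) * (∑ j, min n (∏ k ∈ Iic j, N k) : ℕ)
      < N i * (∑ j, min n (1 + (N j - 1) * ∏ k ∈ Iio j, N k) : ℕ) := by
    rw [← Nat.cast_one, ← Nat.cast_sub hm]
    exact_mod_cast (by omega : (N i - 1) * _ < N i * _)
  rwa [div_mul_eq_mul_div, div_lt_iff₀ (by exact_mod_cast hm), mul_comm _ (N i : ℝ)]
end

section
/- Let T be a uniformly distributed random table with density p ∈ [0,1] on ∏_{i=1}^c {1,…,N_i} and let ⪯ be any recursive order on this tuple space. For each column i, let R_i be the expected number of runs and S_i the expected number of seamless joins in column i of the ⪯-sorted list of T. Then R_i + S_i = (∏_{k=1}^{i} N_k) · (1 − (1−p)^{∏_{k=i+1}^{c} N_k}) for every i. In particular, the expected sum of runs and seamless joins in each column is the same for all recursive orders. -/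
/-- The number of seamless joins in column `i`: adjacent pairs of rows with equal
`i`-th components that differ in some earlier component. -/
def seamlessCol {c : ℕ} {N : Fin c → ℕ} (i : Fin c) :
    List (∀ k : Fin c, Fin (N k)) → ℕ
  | [] => 0
  | a :: l => ((a :: l).zip l).countP
      (fun ab => decide (ab.1 i = ab.2 i ∧ ∃ j : Fin c, j < i ∧ ab.1 j ≠ ab.2 j))

/-- Expected value of `f` over the random subset of `α` in which each element is
included independently with probability `p`. -/
noncomputable def expVal {α : Type*} [Fintype α] [DecidableEq α] (p : ℝ)
    (f : Finset α → ℝ) : ℝ :=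
  ∑ S ∈ (Finset.univ : Finset α).powerset,
    p ^ S.card * (1 - p) ^ (Fintype.card α - S.card) * f S

/-!
In a list sorted by a recursive order, the rows sharing their first `i + 1` components form
one contiguous block. An adjacent pair of rows is a run boundary or a seamless join in column
`i` exactly when these prefixes differ, so runs plus seamless joins count the blocks, i.e. the
distinct prefixes present in the table, whatever the recursive order. By linearity, the expected
number of distinct prefixes is the sum over all `∏_{k ≤ i} N_k` prefixes of the probability that
the table meets the fibre of that prefix; the fibre has `∏_{k > i} N_k` elements, each missed
independently with probability `1 - p`.
-/

open Finset

namespace List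

variable {α β : Type*}

theorem countP_add_countP_of_disjoint {p q : α → Bool} {l : List α}
    (h : ∀ a ∈ l, ¬(p a ∧ q a)) :
    l.countP p + l.countP q = l.countP (fun a => p a || q a) := by
  induction l with
  | nil => rfl
  | cons a l ih =>
    have ha := h a mem_cons_self
    have hih := ih fun b hb => h b (mem_cons_of_mem a hb)
    simp only [countP_cons]
    by_cases hp : p a <;> by_cases hq : q a <;> simp [hp, hq] at ha ⊢ <;> omega

/-- `hconvex` says that the fibres of `f` are convex for `r`, so in an `r`-sorted list each value
of `f` occupies one block. -/
theorem card_toFinset_map_eq_one_add_countP_zip [DecidableEq β] {r : α → α → Prop} (f : α → β)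
    (hconvex : ∀ x y z, r x y → r y z → f x = f z → f y = f x) {a : α} {l : List α}
    (hl : (a :: l).Pairwise r) :
    ((a :: l).map f).toFinset.card = 1 + ((a :: l).zip l).countP (fun xy => f xy.1 ≠ f xy.2) := by
  induction l generalizing a with
  | nil => simp
  | cons b l ih =>
    have hbl : (b :: l).Pairwise r := hl.of_cons
    rw [map_cons, toFinset_cons, zip_cons_cons, countP_cons, ← add_assoc, ← ih hbl]
    by_cases hab : f a = f b
    · rw [Finset.card_insert_of_mem (by simp [hab])]
      simp [hab]
    · have hfresh : f a ∉ ((b :: l).map f).toFinset := by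
        simp only [mem_toFinset, mem_map, mem_cons, not_exists, not_and]
        rintro z (rfl | hz) hza
        · exact hab hza.symm
        · exact hab (hconvex a b z (rel_of_pairwise_cons hl mem_cons_self)
            (rel_of_pairwise_cons hbl hz) hza.symm).symm
      rw [Finset.card_insert_of_notMem hfresh]
      simp [hab]

end List

section Runs

variable {c : ℕ} {N : Fin c → ℕ}

theorem restrict_Iic_eq_restrict_Iic_iff {i : Fin c} {a b : ∀ k : Fin c, Fin (N k)} :
    (Iic i).restrict a = (Iic i).restrict b ↔ ∀ k ≤ i, a k = b k := by
  simp [funext_iff]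

theorem IsRecursiveOrder.restrict_Iic_eq
    {le : (∀ k : Fin c, Fin (N k)) → (∀ k : Fin c, Fin (N k)) → Prop}
    (hrec : IsRecursiveOrder N le) (i : Fin c) {a b d : ∀ k : Fin c, Fin (N k)}
    (hab : le a b) (hbd : le b d) (had : (Iic i).restrict a = (Iic i).restrict d) :
    (Iic i).restrict b = (Iic i).restrict a := by
  rw [restrict_Iic_eq_restrict_Iic_iff] at had ⊢
  refine fun k hk => hrec (i + 1) a b d hab hbd (fun m hm => had m ?_) k (by omega)
  rw [Fin.le_def]; omega

theorem ne_or_seamless_iff_restrict_Iic_ne {i : Fin c} {x y : ∀ k : Fin c, Fin (N k)} :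
    (x i ≠ y i ∨ (x i = y i ∧ ∃ j < i, x j ≠ y j)) ↔ (Iic i).restrict x ≠ (Iic i).restrict y := by
  simp only [ne_eq, restrict_Iic_eq_restrict_Iic_iff]
  constructor
  · rintro (hi | ⟨-, j, hji, hj⟩) hall
    · exact hi (hall i le_rfl)
    · exact hj (hall j hji.le)
  · intro hall
    by_cases hi : x i = y i
    · obtain ⟨j, hji, hj⟩ := not_forall₂.mp hall
      exact Or.inr ⟨hi, j, lt_of_le_of_ne hji (by rintro rfl; exact hj hi), hj⟩
    · exact Or.inl hi

theorem runsCol_add_seamlessCol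
    {le : (∀ k : Fin c, Fin (N k)) → (∀ k : Fin c, Fin (N k)) → Prop}
    (hrec : IsRecursiveOrder N le) (i : Fin c) {L : List (∀ k : Fin c, Fin (N k))}
    (hL : L.Pairwise le) :
    runsCol i L + seamlessCol i L = (L.map (Iic i).restrict).toFinset.card := by
  cases L with
  | nil => rfl
  | cons a l =>
    rw [List.card_toFinset_map_eq_one_add_countP_zip (Iic i).restrict
        (fun _ _ _ => hrec.restrict_Iic_eq i) hL,
      runsCol, seamlessCol, add_assoc, List.countP_add_countP_of_disjoint (by simp +contextual)]
    congr 1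
    refine List.countP_congr fun _ _ => ?_
    simpa only [Bool.or_eq_true, decide_eq_true_eq] using ne_or_seamless_iff_restrict_Iic_ne

end Runs

section Expectation

variable {α : Type*} [Fintype α] [DecidableEq α] (p : ℝ)

theorem expVal_add (f g : Finset α → ℝ) :
    expVal p (fun S => f S + g S) = expVal p f + expVal p g := by
  simp only [expVal, mul_add, sum_add_distrib]

theorem expVal_sub (f g : Finset α → ℝ) :
    expVal p (fun S => f S - g S) = expVal p f - expVal p g := by
  simp only [expVal, mul_sub, sum_sub_distrib]

theorem expVal_sum {ι : Type*} (s : Finset ι) (f : ι → Finset α → ℝ) :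
    expVal p (fun S => ∑ q ∈ s, f q S) = ∑ q ∈ s, expVal p (f q) := by
  simp only [expVal, mul_sum]
  exact sum_comm

theorem expVal_prod (w : α → ℝ) :
    expVal p (fun S => ∏ x ∈ S, w x) = ∏ x, (p * w x + (1 - p)) := by
  rw [prod_add, expVal]
  refine sum_congr rfl fun S _ => ?_
  rw [prod_mul_distrib, prod_const, prod_const, ← compl_eq_univ_sdiff, card_compl]
  ring

theorem expVal_one : expVal p (fun _ : Finset α => (1 : ℝ)) = 1 := by
  simpa using expVal_prod p (fun _ => 1)

theorem expVal_card_image {β : Type*} [Fintype β] [DecidableEq β] (π : α → β) :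
    expVal p (fun S => ((S.image π).card : ℝ)) = ∑ q, (1 - (1 - p) ^ #{x | π x = q}) := by
  have hcard : ∀ S : Finset α,
      ((S.image π).card : ℝ) = ∑ q, (1 - ∏ x ∈ S, if π x ≠ q then (1 : ℝ) else 0) := by
    intro S
    have hmem : ∀ q, (1 - ∏ x ∈ S, if π x ≠ q then (1 : ℝ) else 0) =
        if q ∈ S.image π then 1 else 0 := by
      intro q
      rw [prod_boole]
      by_cases hq : q ∈ S.image π <;> simp_all
    rw [sum_congr rfl fun q _ => hmem q, sum_boole, filter_mem_eq_inter, univ_inter]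
  simp_rw [hcard, expVal_sum, expVal_sub, expVal_one, expVal_prod]
  refine sum_congr rfl fun q _ => ?_
  have hfactor : ∀ x, p * (if π x ≠ q then 1 else 0) + (1 - p) = if π x = q then 1 - p else 1 := by
    intro x
    by_cases hx : π x = q <;> simp [hx]
  rw [prod_congr rfl fun x _ => hfactor x, ← prod_filter, prod_const]

end Expectation

theorem card_filter_restrict_eq {ι : Type*} [Fintype ι] [DecidableEq ι] {β : ι → Type*}
    [∀ k, Fintype (β k)] [∀ k, DecidableEq (β k)] (s : Finset ι) (q : ∀ k : s, β k) :
    #{x : ∀ k, β k | s.restrict x = q} = ∏ k ∈ sᶜ, Fintype.card (β k) := by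
  have hfiber : ({x : ∀ k, β k | s.restrict x = q} : Finset _) =
      Fintype.piFinset fun k => if h : k ∈ s then {q ⟨k, h⟩} else univ := by
    ext x
    simp only [mem_filter, mem_univ, true_and, Fintype.mem_piFinset, funext_iff]
    refine ⟨fun h k => ?_, fun h k => by simpa [k.2] using h k⟩
    split_ifs with hk
    · exact mem_singleton.2 (h ⟨k, hk⟩)
    · exact mem_univ _
  rw [hfiber, Fintype.card_piFinset, ← univ_inter sᶜ, ← prod_ite_mem]
  refine prod_congr rfl fun k _ => ?_
  by_cases hk : k ∈ s <;> simp [hk]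

theorem expected_runs_plus_seamless_general {c : ℕ} {N : Fin c → ℕ}
    (p : ℝ)
    (le : (∀ k : Fin c, Fin (N k)) → (∀ k : Fin c, Fin (N k)) → Prop)
    (hrec : IsRecursiveOrder N le)
    (sortedOf : Finset (∀ k : Fin c, Fin (N k)) → List (∀ k : Fin c, Fin (N k)))
    (hsorted : ∀ S, (sortedOf S).Pairwise le ∧ (sortedOf S).Nodup ∧
      ∀ x, x ∈ sortedOf S ↔ x ∈ S)
    (i : Fin c) :
    expVal p (fun S => (runsCol i (sortedOf S) : ℝ))
        + expVal p (fun S => (seamlessCol i (sortedOf S) : ℝ))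
      = (∏ k ∈ Finset.Iic i, (N k : ℝ)) *
          (1 - (1 - p) ^ (∏ k ∈ Finset.Ioi i, N k)) := by
  have hprefixes : ∀ S,
      ((sortedOf S).map (Iic i).restrict).toFinset = S.image (Iic i).restrict := by
    intro S
    ext q
    simp [(hsorted S).2.2]
  have hcount : ∀ S, (runsCol i (sortedOf S) : ℝ) + seamlessCol i (sortedOf S) =
      #(S.image (Iic i).restrict) := by
    intro S
    rw [← hprefixes, ← runsCol_add_seamlessCol hrec i (hsorted S).1, Nat.cast_add]
  have hcompl : (Iic i)ᶜ = Ioi i := by ext; simp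
  rw [← expVal_add]
  simp only [hcount, expVal_card_image, card_filter_restrict_eq (β := fun k => Fin (N k)), hcompl,
    sum_const, card_univ, Fintype.card_pi, Fintype.card_fin, prod_coe_sort, nsmul_eq_mul]
  push_cast
  ring

/-- For a uniformly distributed random table with density `p ∈ [0,1]` sorted by
any recursive order, the expected number of runs plus seamless joins in column
`i` equals `(∏_{k ≤ i} N_k) · (1 − (1−p)^{∏_{k > i} N_k})`; in particular it is
the same for all recursive orders. -/
theorem expected_runs_plus_seamless {c : ℕ} {N : Fin c → ℕ}
    (p : ℝ) (hp0 : 0 ≤ p) (hp1 : p ≤ 1)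
    (le : (∀ k : Fin c, Fin (N k)) → (∀ k : Fin c, Fin (N k)) → Prop)
    (hlin : IsLinearOrder _ le) (hrec : IsRecursiveOrder N le)
    (sortedOf : Finset (∀ k : Fin c, Fin (N k)) → List (∀ k : Fin c, Fin (N k)))
    (hsorted : ∀ S, (sortedOf S).Pairwise le ∧ (sortedOf S).Nodup ∧
      ∀ x, x ∈ sortedOf S ↔ x ∈ S)
    (i : Fin c) :
    expVal p (fun S => (runsCol i (sortedOf S) : ℝ))
        + expVal p (fun S => (seamlessCol i (sortedOf S) : ℝ))
      = (∏ k ∈ Finset.Iic i, (N k : ℝ)) *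
          (1 - (1 - p) ^ (∏ k ∈ Finset.Ioi i, N k)) :=
  expected_runs_plus_seamless_general p le hrec sortedOf hsorted i
end

section
/- Fix p ∈ (0,1] and define, for a sequence of positive integers (M_1,…,M_c), f(M_1,…,M_c) = ∑_{i=1}^c (∏_{k=1}^{i} M_k) · (1 − (1−p)^{∏_{k=i+1}^{c} M_k}). If N_1 ≤ N_2 ≤ … ≤ N_c are positive integers, then for every permutation σ of {1,…,c}, f(N_1,…,N_c) ≤ f(N_{σ(1)},…,N_{σ(c)}). That is, the expected sum of runs and seamless joins over a uniformly distributed random table is minimized when the columns are ordered by increasing cardinality. -/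
/-!
The inequality holds term by term. Put `T = ∏ₖ Nₖ`, `aᵢ = ∏_{k ≤ i} Nₖ` and `bᵢ = ∏_{k ≤ i} N_{σ k}`;
then the exponents are `T / aᵢ` and `T / bᵢ`, and `aᵢ ≤ bᵢ` because the `i + 1` smallest
cardinalities have the smallest product. Since `x (1 - q ^ (T / x)) = T (1 - q) · A(T / x)`,
where `A(m)` is the average of `1, q, …, q ^ (m - 1)`, and averages of a decreasing sequence
decrease, the term grows with `x`.
-/

open Finset

theorem Antitone.nsmul_sum_range_le {M : Type*} [AddCommMonoid M] [PartialOrder M]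
    [IsOrderedAddMonoid M] {f : ℕ → M} (hf : Antitone f) {m n : ℕ} (hnm : n ≤ m) :
    n • ∑ j ∈ range m, f j ≤ m • ∑ j ∈ range n, f j := by
  have htail : ∑ j ∈ Ico n m, f j ≤ (m - n) • f n := by
    simpa using sum_le_card_nsmul (Ico n m) f (f n) fun j hj ↦ hf (mem_Ico.1 hj).1
  have hhead : n • f n ≤ ∑ j ∈ range n, f j := by
    simpa using card_nsmul_le_sum (range n) f (f n) fun j hj ↦ hf (mem_range.1 hj).le
  calc n • ∑ j ∈ range m, f j
      = n • ∑ j ∈ range n, f j + n • ∑ j ∈ Ico n m, f j := by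
        rw [← sum_range_add_sum_Ico f hnm, nsmul_add]
    _ ≤ n • ∑ j ∈ range n, f j + (m - n) • (n • f n) := by
        grw [htail, smul_comm]
    _ ≤ n • ∑ j ∈ range n, f j + (m - n) • ∑ j ∈ range n, f j := by grw [hhead]
    _ = m • ∑ j ∈ range n, f j := by rw [← add_nsmul, Nat.add_sub_cancel' hnm]

theorem mul_one_sub_pow_le_of_mul_eq {q : ℝ} (hq0 : 0 ≤ q) (hq1 : q ≤ 1) {a b m n : ℕ}
    (hab : a ≤ b) (h : a * m = b * n) :
    (a : ℝ) * (1 - q ^ m) ≤ b * (1 - q ^ n) := by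
  rcases a.eq_zero_or_pos with rfl | ha
  · simpa using mul_nonneg (Nat.cast_nonneg b) (sub_nonneg.2 (pow_le_one₀ hq0 hq1))
  have hnm : n ≤ m :=
    Nat.le_of_mul_le_mul_left (h ▸ Nat.mul_le_mul_right m hab) (ha.trans_le hab)
  rcases n.eq_zero_or_pos with rfl | hn
  · obtain rfl : m = 0 := by simpa [ha.ne'] using h
    simp
  have havg := (pow_right_anti₀ hq0 hq1).nsmul_sum_range_le hnm
  simp only [nsmul_eq_mul] at havg
  have hcast : (a : ℝ) * m = b * n := by exact_mod_cast h
  have hsum : (a : ℝ) * ∑ j ∈ range m, q ^ j ≤ b * ∑ j ∈ range n, q ^ j := by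
    refine le_of_mul_le_mul_left ?_ (Nat.cast_pos.2 hn : (0 : ℝ) < n)
    calc (n : ℝ) * (a * ∑ j ∈ range m, q ^ j) = a * (n * ∑ j ∈ range m, q ^ j) := by ring
      _ ≤ a * (m * ∑ j ∈ range n, q ^ j) := by gcongr
      _ = n * (b * ∑ j ∈ range n, q ^ j) := by linear_combination (∑ j ∈ range n, q ^ j) * hcast
  rw [← mul_neg_geom_sum, ← mul_neg_geom_sum, mul_left_comm, mul_left_comm (b : ℝ)]
  exact mul_le_mul_of_nonneg_left hsum (sub_nonneg.2 hq1)

theorem prod_Iic_le_prod_of_card_eq {α M : Type*} [LinearOrder α] [LocallyFiniteOrderBot α]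
    [CommMonoid M] [PartialOrder M] [IsOrderedMonoid M] {f : α → M} (hf : Monotone f) (a : α)
    {s : Finset α} (hs : #s = #(Iic a)) :
    ∏ k ∈ Iic a, f k ≤ ∏ k ∈ s, f k := by
  calc ∏ k ∈ Iic a, f k = (∏ k ∈ Iic a ∩ s, f k) * ∏ k ∈ Iic a \ s, f k :=
        (prod_inter_mul_prod_sdiff _ _ _).symm
    _ ≤ (∏ k ∈ s ∩ Iic a, f k) * f a ^ #(Iic a \ s) := by
        rw [inter_comm]
        gcongr
        exact prod_le_pow_card _ _ _ fun k hk ↦ hf (mem_Iic.1 (mem_sdiff.1 hk).1)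
    _ ≤ (∏ k ∈ s ∩ Iic a, f k) * ∏ k ∈ s \ Iic a, f k := by
        rw [card_sdiff_comm hs.symm]
        gcongr
        exact pow_card_le_prod _ _ _ fun k hk ↦
          hf (not_le.1 fun hka ↦ (mem_sdiff.1 hk).2 (mem_Iic.2 hka)).le
    _ = ∏ k ∈ s, f k := prod_inter_mul_prod_sdiff _ _ _

theorem increasing_cardinality_minimizes_runs_plus_seamless_general
    (p : ℝ) (hp0 : 0 < p) (hp1 : p ≤ 1) (c : ℕ) (N : Fin c → ℕ)
    (hmono : Monotone N) (σ : Equiv.Perm (Fin c)) :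
    ∑ i : Fin c, (∏ k ∈ Finset.Iic i, (N k : ℝ)) *
        (1 - (1 - p) ^ (∏ k ∈ Finset.Ioi i, N k))
      ≤ ∑ i : Fin c, (∏ k ∈ Finset.Iic i, (N (σ k) : ℝ)) *
          (1 - (1 - p) ^ (∏ k ∈ Finset.Ioi i, N (σ k))) := by
  refine sum_le_sum fun i _ ↦ ?_
  have hsplit (g : Fin c → ℕ) : (∏ k ∈ Iic i, g k) * ∏ k ∈ Ioi i, g k = ∏ k, g k := by
    rw [← prod_mul_prod_compl (Iic i) g]
    congr 2
    ext k
    simp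
  have hfirst : ∏ k ∈ Iic i, N k ≤ ∏ k ∈ Iic i, N (σ k) :=
    (prod_Iic_le_prod_of_card_eq hmono i (card_map σ.toEmbedding)).trans_eq (prod_map _ _ _)
  simp only [← Nat.cast_prod]
  exact mul_one_sub_pow_le_of_mul_eq (by linarith) (by linarith) hfirst
    (by rw [hsplit, hsplit, Equiv.prod_comp σ N])

/-- Fix `p ∈ (0,1]` and let
`f(M_1,…,M_c) = ∑_i (∏_{k ≤ i} M_k) · (1 − (1−p)^{∏_{k > i} M_k})`, the expected
sum of runs and seamless joins of a uniformly distributed random table with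
density `p` sorted by any recursive order. If `N` is nondecreasing then `f(N)` is
at most `f(N ∘ σ)` for every permutation `σ` of the columns: the expected sum of
runs and seamless joins is minimized when columns are ordered by increasing
cardinality. -/
theorem increasing_cardinality_minimizes_runs_plus_seamless
    (p : ℝ) (hp0 : 0 < p) (hp1 : p ≤ 1) (c : ℕ) (N : Fin c → ℕ)
    (hpos : ∀ i, 1 ≤ N i) (hmono : Monotone N) (σ : Equiv.Perm (Fin c)) :
    ∑ i : Fin c, (∏ k ∈ Finset.Iic i, (N k : ℝ)) *
        (1 - (1 - p) ^ (∏ k ∈ Finset.Ioi i, N k))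
      ≤ ∑ i : Fin c, (∏ k ∈ Finset.Iic i, (N (σ k) : ℝ)) *
          (1 - (1 - p) ^ (∏ k ∈ Finset.Ioi i, N (σ k))) :=
  increasing_cardinality_minimizes_runs_plus_seamless_general p hp0 hp1 c N hmono σ
end

section
/- Let N_1 ≤ N_2 ≤ … ≤ N_c be positive integers, let p ∈ (0,1], and let m = min_{1≤k≤c} N_k = N_1. Consider uniformly distributed random tables with density p. Let R↑ be the expected RunCount of the sorted random table on ∏_{i=1}^c {1,…,N_i} under any fixed recursive order (columns ordered in increasing cardinality), and let R_opt be the smallest expected RunCount obtainable by choosing any permutation σ of the columns and any recursive order on the σ-permuted tuple space. Then (R↑ − R_opt)/R↑ ≤ 1/m; that is, sorting a table recursively with the columns ordered in increasing cardinality is asymptotically optimal for large minimum column cardinality. -/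
/-!
For a recursive order, the runs and the seamless joins of column `i` together count the
distinct `(i + 1)`-prefixes of the table. Each of the `a = ∏_{k ≤ i} N k` possible prefixes
occurs with probability `1 - (1 - p) ^ u`, where `u = ∏_{k > i} N k`, so their expected number
is `Aᵢ = a (1 - (1 - p) ^ u)` and `R↑ ≤ ∑ᵢ Aᵢ`. Permuting the columns can only increase each
`Aᵢ`: the product `a u = ∏ N` is fixed, `a` is smallest for increasing cardinalities, and
`a (1 - (1 - p) ^ u)` increases with `a` when `a u` is fixed.

For the permuted order, a seamless join in column `i` enters a new block of the `i`-prefix, and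
the first kept row of that block matches the previous row in column `i` with probability at most
`1 - (1 - p) ^ u`. So the expected number of seamless joins is at most `Aᵢ' / N (σ i) ≤ Aᵢ' / m`,
whence `m R' ≥ (m - 1) ∑ᵢ Aᵢ' ≥ (m - 1) R↑`.
-/

open Finset

namespace RunCount

section Lists

variable {α β : Type*}

theorem _root_.List.countP_add_countP_of_disjoint_s9 (p q : α → Bool) (h : ∀ a, ¬(p a ∧ q a))
    (l : List α) : l.countP p + l.countP q = l.countP fun a => p a || q a := by
  induction l with
  | nil => rfl
  | cons a l ih =>
    simp only [List.countP_cons]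
    have := h a
    cases hp : p a <;> cases hq : q a <;> simp [hp, hq] at this ⊢ <;> omega

theorem _root_.List.Nodup.length_le_card_of_subset [DecidableEq α] {l : List α} {F : Finset α}
    (hl : l.Nodup) (h : ∀ y ∈ l, y ∈ F) : l.length ≤ #F := by
  rw [← List.toFinset_card_of_nodup hl]
  exact card_le_card fun y hy => h y (List.mem_toFinset.1 hy)

theorem _root_.List.Nodup.length_eq_card [DecidableEq α] {l : List α} {F : Finset α}
    (hl : l.Nodup) (h : ∀ y, y ∈ l ↔ y ∈ F) : l.length = #F := by
  rw [← List.toFinset_card_of_nodup hl]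
  exact congrArg card (ext fun y => by rw [List.mem_toFinset, h])

def adjCount (r : α → α → Bool) (l : List α) : ℕ :=
  (l.zip l.tail).countP fun ab => r ab.1 ab.2

@[simp] theorem adjCount_nil (r : α → α → Bool) : adjCount r [] = 0 := rfl

@[simp] theorem adjCount_singleton (r : α → α → Bool) (a : α) : adjCount r [a] = 0 := rfl

theorem adjCount_cons_cons (r : α → α → Bool) (a b : α) (l : List α) :
    adjCount r (a :: b :: l) = (if r a b then 1 else 0) + adjCount r (b :: l) := by
  simp only [adjCount, List.tail_cons, List.zip_cons_cons, List.countP_cons]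
  omega

def keyRuns [DecidableEq β] (g : α → β) : List α → ℕ
  | [] => 0
  | a :: l => 1 + adjCount (fun x y => decide (g x ≠ g y)) (a :: l)

def ConvexFibers (r : α → α → Prop) (g : α → β) : Prop :=
  ∀ x y z, r x y → r y z → g x = g z → g y = g x

theorem ConvexFibers.ne_of_mem_of_ne {r : α → α → Prop} {g : α → β} (hg : ConvexFibers r g)
    {a b : α} {l : List α} (hl : (a :: b :: l).Pairwise r) (hab : g a ≠ g b) :
    ∀ y ∈ b :: l, g y ≠ g a := by
  intro y hy hya
  obtain ⟨hr, hl⟩ := List.pairwise_cons.1 hl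
  rcases List.mem_cons.1 hy with rfl | hy
  · exact hab hya.symm
  · exact hab (hg a b y (hr b (by simp)) ((List.pairwise_cons.1 hl).1 y hy) hya.symm).symm

theorem keyRuns_eq_card_image [DecidableEq α] [DecidableEq β] {r : α → α → Prop} {g : α → β}
    (hg : ConvexFibers r g) :
    ∀ {l : List α}, l.Pairwise r → keyRuns g l = #(l.toFinset.image g)
  | [], _ => rfl
  | [a], _ => by simp [keyRuns]
  | a :: b :: l, hl => by
    have ih := keyRuns_eq_card_image hg hl.of_cons
    simp only [keyRuns, adjCount_cons_cons] at ih ⊢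
    rw [List.toFinset_cons, image_insert]
    by_cases hab : g a = g b
    · rw [hab, insert_eq_of_mem (mem_image_of_mem g (List.mem_toFinset.2 List.mem_cons_self))]
      simpa [hab] using ih
    · have hnot : g a ∉ (b :: l).toFinset.image g := by
        simp only [mem_image, List.mem_toFinset, not_exists, not_and]
        exact fun y hy => hg.ne_of_mem_of_ne hl hab y hy
      rw [card_insert_of_notMem hnot, ← ih]
      simp [hab]
      omega

theorem mem_cons_iff_of_mem_iff {g : α → β} {a : α} {b t : List α}
    (h : ∀ y, y ∈ b ↔ y ∈ t ∧ g y = g a) (y : α) : y ∈ a :: b ↔ y ∈ a :: t ∧ g y = g a := by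
  simp only [List.mem_cons, h]
  constructor
  · rintro (rfl | ⟨hy, hya⟩)
    exacts [⟨Or.inl rfl, rfl⟩, ⟨Or.inr hy, hya⟩]
  · rintro ⟨rfl | hy, hya⟩
    exacts [Or.inl rfl, Or.inr ⟨hy, hya⟩]

theorem mem_iff_mem_cons_of_ne {g : α → β} {a x : α} {b t : List α}
    (h : ∀ y, y ∈ b ↔ y ∈ t ∧ g y = g x) (hax : g a ≠ g x) (y : α) :
    y ∈ b ↔ y ∈ a :: t ∧ g y = g x := by
  rw [h, List.mem_cons]
  exact ⟨fun hy => ⟨Or.inr hy.1, hy.2⟩,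
    fun ⟨hy, hyx⟩ => ⟨hy.resolve_left (by rintro rfl; exact hax hyx), hyx⟩⟩

theorem exists_flatten_eq_fibers {r : α → α → Prop} {g : α → β} (hg : ConvexFibers r g) :
    ∀ {l : List α}, l.Pairwise r → l.Nodup →
      ∃ bs : List (List α), bs.flatten = l ∧
        ∀ b ∈ bs, ∃ x ∈ b, ∀ y, y ∈ b ↔ y ∈ l ∧ g y = g x
  | [], _, _ => ⟨[], rfl, by simp⟩
  | a :: t, hl, hnd => by
    obtain ⟨bs, rfl, hbs⟩ := exists_flatten_eq_fibers hg hl.of_cons hnd.of_cons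
    rcases bs with _ | ⟨b₀, bs⟩
    · exact ⟨[[a]], rfl, by simp⟩
    obtain ⟨x₀, hx₀, hb₀⟩ := hbs b₀ List.mem_cons_self
    obtain ⟨h, b₀, rfl⟩ := List.exists_cons_of_ne_nil (List.ne_nil_of_mem hx₀)
    have hh : g h = g x₀ := ((hb₀ h).1 List.mem_cons_self).2
    have hdisj := (List.pairwise_cons.1 (List.nodup_flatten.1 hnd.of_cons).2).1
    simp only [List.flatten_cons, List.cons_append] at hl hbs hb₀ ⊢
    by_cases hah : g a = g h
    · rw [← hh, ← hah] at hb₀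
      refine ⟨(a :: h :: b₀) :: bs, rfl, ?_⟩
      rintro b (_ | ⟨_, hb⟩)
      · exact ⟨a, List.mem_cons_self, mem_cons_iff_of_mem_iff hb₀⟩
      obtain ⟨x, hx, hbx⟩ := hbs b (List.mem_cons_of_mem _ hb)
      refine ⟨x, hx, mem_iff_mem_cons_of_ne hbx fun hax => ?_⟩
      exact hdisj b hb ((hb₀ x).2 ⟨((hbx x).1 hx).1, hax.symm⟩) hx
    · have hne := hg.ne_of_mem_of_ne hl hah
      refine ⟨[a] :: (h :: b₀) :: bs, rfl, ?_⟩
      rintro b (_ | ⟨_, hb⟩)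
      · exact ⟨a, List.mem_singleton_self a,
          mem_cons_iff_of_mem_iff fun y => by simpa using fun hy => hne y hy⟩
      obtain ⟨x, hx, hbx⟩ := hbs b hb
      exact ⟨x, hx, mem_iff_mem_cons_of_ne hbx fun hax => hne x ((hbx x).1 hx).1 hax.symm⟩

end Lists

section RandomSublist

variable {α : Type*} (p : ℝ)

/-- The expectation of `g` on the random sublist of `l` that keeps each entry independently
with probability `p`. -/
noncomputable def sublistExp : (List α → ℝ) → List α → ℝ
  | g, [] => g []
  | g, a :: l => p * sublistExp (fun L => g (a :: L)) l + (1 - p) * sublistExp g l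

theorem sublistExp_const_add (k : ℝ) (g : List α → ℝ) (l : List α) :
    sublistExp p (fun L => k + g L) l = k + sublistExp p g l := by
  induction l generalizing g with
  | nil => rfl
  | cons a l ih => simp only [sublistExp, ih]; ring

variable (r : α → α → Bool)

/-- The probability that the first kept entry of `l` is `r`-related to `x`. -/
noncomputable def firstHitProb (x : α) : List α → ℝ
  | [] => 0
  | a :: l => (if r x a then p else 0) + (1 - p) * firstHitProb x l

noncomputable def expAdjCount : List α → ℝ
  | [] => 0
  | a :: l => expAdjCount l + p * firstHitProb p r a l

theorem sublistExp_adjCount_cons (l : List α) (x : α) :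
    sublistExp p (fun L => (adjCount r (x :: L) : ℝ)) l
      = expAdjCount p r l + firstHitProb p r x l := by
  induction l generalizing x with
  | nil => simp [sublistExp, expAdjCount, firstHitProb]
  | cons a l ih =>
    simp only [sublistExp, adjCount_cons_cons, Nat.cast_add, Nat.cast_ite, Nat.cast_one,
      Nat.cast_zero, sublistExp_const_add, ih, expAdjCount, firstHitProb]
    split_ifs <;> ring

theorem sublistExp_adjCount (l : List α) :
    sublistExp p (fun L => (adjCount r L : ℝ)) l = expAdjCount p r l := by
  induction l with
  | nil => simp [sublistExp, expAdjCount]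
  | cons a l ih =>
    simp only [sublistExp, sublistExp_adjCount_cons, ih, expAdjCount]
    ring

variable {p r}

theorem firstHitProb_append (x : α) (u s : List α) :
    firstHitProb p r x (u ++ s)
      = firstHitProb p r x u + (1 - p) ^ u.length * firstHitProb p r x s := by
  induction u with
  | nil => simp [firstHitProb]
  | cons a u ih => simp only [List.cons_append, firstHitProb, ih, List.length_cons]; ring

section Bounds

variable (hp0 : 0 ≤ p) (hp1 : p ≤ 1)
include hp0 hp1

theorem firstHitProb_nonneg (x : α) (l : List α) : 0 ≤ firstHitProb p r x l := by
  induction l with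
  | nil => exact le_rfl
  | cons a l ih =>
    exact add_nonneg (by split_ifs <;> linarith) (mul_nonneg (by linarith) ih)

/-- The first kept entry is one of the `k` related ones with probability at most that of a
kept entry among the first `k` positions. -/
theorem firstHitProb_le (x : α) (l : List α) :
    firstHitProb p r x l ≤ 1 - (1 - p) ^ l.countP (r x) := by
  have hq : 0 ≤ 1 - p := by linarith
  induction l with
  | nil => simp [firstHitProb]
  | cons a l ih =>
    have hk : (1 - p) ^ l.countP (r x) ≤ 1 := pow_le_one₀ hq (by linarith)
    simp only [firstHitProb, List.countP_cons]
    split_ifs <;> simp only [pow_succ, add_zero] <;>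
      nlinarith [mul_le_mul_of_nonneg_left ih hq]

theorem firstHitProb_eq_zero {x : α} {l : List α} (h : ∀ y ∈ l, r x y = false) :
    firstHitProb p r x l = 0 := by
  have h0 : l.countP (r x) = 0 := List.countP_eq_zero.2 fun y hy => by simp [h y hy]
  refine le_antisymm ?_ (firstHitProb_nonneg hp0 hp1 x l)
  simpa [h0] using firstHitProb_le hp0 hp1 (r := r) x l

theorem firstHitProb_flatten_le (x : α) {B P : ℕ} {bs : List (List α)}
    (hlen : ∀ b ∈ bs, b.length = B) (hcount : ∀ b ∈ bs, b.countP (r x) ≤ P) :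
    firstHitProb p r x bs.flatten * (1 - (1 - p) ^ B) ≤ 1 - (1 - p) ^ P := by
  have hq : 0 ≤ 1 - p := by linarith
  have hP : (1 - p) ^ P ≤ 1 := pow_le_one₀ hq (by linarith)
  have hB : (1 - p) ^ B ≤ 1 := pow_le_one₀ hq (by linarith)
  induction bs with
  | nil => simpa [firstHitProb] using hP
  | cons b bs ih =>
    simp only [List.mem_cons, forall_eq_or_imp] at hlen hcount
    have hb : firstHitProb p r x b ≤ 1 - (1 - p) ^ P :=
      (firstHitProb_le hp0 hp1 x b).trans
        (by gcongr (1 - ?_); exact pow_le_pow_of_le_one hq (by linarith) hcount.1)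
    rw [List.flatten_cons, firstHitProb_append, hlen.1]
    nlinarith [ih hlen.2 hcount.2, pow_nonneg hq B, firstHitProb_nonneg hp0 hp1 (r := r) x b]

theorem expAdjCount_append_le {C : ℝ} {u s : List α} (hu : ∀ x ∈ u, ∀ y ∈ u, r x y = false)
    (hs : ∀ x ∈ u, firstHitProb p r x s ≤ C) :
    expAdjCount p r (u ++ s) ≤ expAdjCount p r s + (1 - (1 - p) ^ u.length) * C := by
  induction u with
  | nil => simp
  | cons x u ih =>
    simp only [List.mem_cons, forall_eq_or_imp] at hu hs
    have hxu : firstHitProb p r x u = 0 :=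
      firstHitProb_eq_zero hp0 hp1 fun y hy => hu.1.2 y hy
    have ih := ih (fun y hy z hz => hu.2 y hy |>.2 z hz) hs.2
    simp only [List.cons_append, expAdjCount, firstHitProb_append, hxu, List.length_cons, pow_succ,
      zero_add]
    have hpq : 0 ≤ p * (1 - p) ^ u.length := mul_nonneg hp0 (pow_nonneg (by linarith) _)
    nlinarith [mul_le_mul_of_nonneg_left hs.1 hpq]

end Bounds

theorem expAdjCount_flatten_le (hp0 : 0 < p) (hp1 : p ≤ 1) {B P : ℕ} (hB : B ≠ 0)
    {bs : List (List α)} (hlen : ∀ b ∈ bs, b.length = B)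
    (hcount : ∀ x, ∀ b ∈ bs, b.countP (r x) ≤ P)
    (hinner : ∀ b ∈ bs, ∀ x ∈ b, ∀ y ∈ b, r x y = false) :
    expAdjCount p r bs.flatten ≤ bs.length * (1 - (1 - p) ^ P) := by
  have hqB : 0 < 1 - (1 - p) ^ B := sub_pos.2 (pow_lt_one₀ (by linarith) (by linarith) hB)
  induction bs with
  | nil => simp [expAdjCount]
  | cons b bs ih =>
    simp only [List.mem_cons, forall_eq_or_imp] at hlen hcount hinner
    have hhit : ∀ x ∈ b, firstHitProb p r x bs.flatten ≤ (1 - (1 - p) ^ P) / (1 - (1 - p) ^ B) :=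
      fun x _ => (le_div_iff₀ hqB).2 <|
        firstHitProb_flatten_le hp0.le hp1 x hlen.2 fun b' hb' => (hcount x).2 b' hb'
    have := expAdjCount_append_le hp0.le hp1 hinner.1 hhit
    rw [hlen.1, mul_div_cancel₀ _ hqB.ne'] at this
    rw [List.flatten_cons, List.length_cons]
    push_cast
    linarith [ih hlen.2 (fun x => (hcount x).2) hinner.2]

end RandomSublist

section ExpVal

variable {α β : Type*} [DecidableEq α] (p : ℝ)

theorem sum_powerset_filter_eq_sublistExp (g : List α → ℝ) {l : List α} (hl : l.Nodup) :
    ∑ S ∈ l.toFinset.powerset, p ^ #S * (1 - p) ^ (l.length - #S) * g (l.filter (· ∈ S))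
      = sublistExp p g l := by
  induction l generalizing g with
  | nil => simp [sublistExp]
  | cons a t ih =>
    obtain ⟨hat, ht⟩ := List.nodup_cons.1 hl
    have ha : a ∉ t.toFinset := by simpa using hat
    have hcard : ∀ S ∈ t.toFinset.powerset, #S ≤ t.length := fun S hS =>
      (card_le_card (mem_powerset.1 hS)).trans (List.toFinset_card_le t)
    have hnot : ∀ S ∈ t.toFinset.powerset, a ∉ S := fun S hS haS => ha (mem_powerset.1 hS haS)
    have hfilter : ∀ S ∈ t.toFinset.powerset,
        t.filter (· ∈ insert a S) = t.filter (· ∈ S) := fun S _ =>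
      List.filter_congr fun x hx => by simp [show x ≠ a from fun h => hat (h ▸ hx)]
    rw [List.toFinset_cons, sum_powerset_insert ha, sublistExp, ← ih _ ht, ← ih _ ht, mul_sum,
      mul_sum, add_comm]
    congr 1
    · refine sum_congr rfl fun S hS => ?_
      rw [card_insert_of_notMem (hnot S hS), List.filter_cons_of_pos (by simp), hfilter S hS,
        List.length_cons, Nat.add_sub_add_right, pow_succ]
      ring
    · refine sum_congr rfl fun S hS => ?_
      rw [List.filter_cons_of_neg (by simpa using hnot S hS), List.length_cons,
        Nat.sub_add_comm (hcard S hS), pow_succ]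
      ring

variable [Fintype α]

theorem expVal_add (f g : Finset α → ℝ) :
    expVal p (fun S => f S + g S) = expVal p f + expVal p g := by
  simp only [expVal, mul_add, sum_add_distrib]

theorem expVal_sub (f g : Finset α → ℝ) :
    expVal p (fun S => f S - g S) = expVal p f - expVal p g := by
  simp only [expVal, mul_sub, sum_sub_distrib]

theorem expVal_sum {ι : Type*} (s : Finset ι) (f : ι → Finset α → ℝ) :
    expVal p (fun S => ∑ i ∈ s, f i S) = ∑ i ∈ s, expVal p (f i) := by
  simp only [expVal, mul_sum]
  exact sum_comm

theorem expVal_const (k : ℝ) : expVal p (fun _ : Finset α => k) = k := by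
  rw [expVal, ← sum_mul, ← card_univ, sum_pow_mul_eq_add_pow]
  simp

theorem expVal_nonneg {p : ℝ} (hp0 : 0 ≤ p) (hp1 : p ≤ 1) {f : Finset α → ℝ}
    (hf : ∀ S, 0 ≤ f S) : 0 ≤ expVal p f :=
  sum_nonneg fun S _ =>
    mul_nonneg (mul_nonneg (pow_nonneg hp0 _) (pow_nonneg (sub_nonneg.2 hp1) _)) (hf S)

theorem expVal_ite_disjoint (F : Finset α) :
    expVal p (fun S => if Disjoint S F then 1 else 0) = (1 - p) ^ #F := by
  have hfilter : {S ∈ (univ : Finset α).powerset | Disjoint S F} = Fᶜ.powerset := by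
    ext S
    simp [subset_compl_iff_disjoint_right]
  have hweight : ∀ S ∈ Fᶜ.powerset, p ^ #S * (1 - p) ^ (Fintype.card α - #S)
      = (1 - p) ^ #F * (p ^ #S * (1 - p) ^ (#Fᶜ - #S)) := by
    intro S hS
    have := card_le_card (mem_powerset.1 hS)
    rw [card_compl] at this ⊢
    rw [mul_left_comm, ← pow_add]
    congr 3
    have := card_le_univ F
    omega
  simp only [expVal, mul_ite, mul_one, mul_zero]
  rw [← sum_filter, hfilter, sum_congr rfl hweight, ← mul_sum, sum_pow_mul_eq_add_pow]
  simp

/-- A value of `g` is missed exactly when its whole fibre is. -/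
theorem expVal_card_image [DecidableEq β] (g : α → β) :
    expVal p (fun S => (#(S.image g) : ℝ))
      = ∑ v ∈ univ.image g, (1 - (1 - p) ^ #({x | g x = v} : Finset α)) := by
  have hcard : ∀ S : Finset α, (#(S.image g) : ℝ)
      = ∑ v ∈ univ.image g, (1 - if Disjoint S ({x | g x = v} : Finset α) then 1 else 0) := by
    intro S
    have hsub : S.image g ⊆ univ.image g := image_subset_image (subset_univ S)
    have hmem : ∀ v, v ∈ S.image g ↔ ¬Disjoint S ({x | g x = v} : Finset α) := by
      intro v
      simp [not_disjoint_iff, eq_comm]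
    calc (#(S.image g) : ℝ) = ∑ v ∈ univ.image g, if v ∈ S.image g then 1 else 0 := by
          rw [sum_boole, filter_mem_eq_inter, inter_eq_right.2 hsub]
      _ = _ := sum_congr rfl fun v _ => by simp only [hmem]; split_ifs <;> simp
  simp_rw [hcard, expVal_sum, expVal_sub, expVal_const, expVal_ite_disjoint]

theorem expVal_comp_image [Fintype β] [DecidableEq β] {f : α → β} (hf : Function.Bijective f)
    (h : Finset β → ℝ) :
    expVal p (fun S => h (S.image f)) = expVal p h := by
  let e := (Equiv.ofBijective f hf).finsetCongr
  have he : ∀ S, e S = S.image f := fun S => by simp [e, map_eq_image]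
  simp only [expVal, powerset_univ, ← he]
  rw [← e.sum_comp]
  refine sum_congr rfl fun S _ => ?_
  rw [he, card_image_of_injective S hf.injective, Fintype.card_of_bijective hf]

theorem expVal_eq_sublistExp (g : List α → ℝ) {l : List α} (hl : l.Nodup) (hmem : ∀ x, x ∈ l) :
    expVal p (fun S => g (l.filter (· ∈ S))) = sublistExp p g l := by
  have huniv : l.toFinset = univ := eq_univ_of_forall fun x => List.mem_toFinset.2 (hmem x)
  rw [← sum_powerset_filter_eq_sublistExp p g hl, huniv, ← List.toFinset_card_of_nodup hl, huniv,
    card_univ]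
  rfl

end ExpVal

section Restrict

variable {ι : Type*} {π : ι → Type*}

theorem restrict_eq_restrict_iff {s : Finset ι} {x y : ∀ i, π i} :
    s.restrict x = s.restrict y ↔ ∀ i ∈ s, x i = y i :=
  ⟨fun h i hi => congrFun h ⟨i, hi⟩, fun h => funext fun i => h i i.2⟩

variable [Fintype ι] [DecidableEq ι] [∀ i, Fintype (π i)] [∀ i, DecidableEq (π i)]

theorem card_restrict_fiber (s : Finset ι) (x : ∀ i, π i) :
    #{y | s.restrict y = s.restrict x} = ∏ i ∈ sᶜ, Fintype.card (π i) := by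
  have : ({y | s.restrict y = s.restrict x} : Finset (∀ i, π i))
      = Fintype.piFinset fun i => if i ∈ s then {x i} else univ := by
    ext y
    simp only [mem_filter, mem_univ, true_and, restrict_eq_restrict_iff, Fintype.mem_piFinset]
    refine forall_congr' fun i => ?_
    split_ifs <;> simp [*]
  rw [this, Fintype.card_piFinset, ← univ_inter sᶜ, ← prod_ite_mem]
  refine prod_congr rfl fun i _ => ?_
  split_ifs <;> simp_all

theorem card_image_restrict [∀ i, Nonempty (π i)] (s : Finset ι) :
    #(univ.image (s.restrict (π := π))) = ∏ i ∈ s, Fintype.card (π i) := by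
  have hsurj : Function.Surjective (s.restrict (π := π)) := fun v =>
    ⟨fun i => if h : i ∈ s then v ⟨i, h⟩ else Classical.arbitrary _,
      funext fun i => by simp [Finset.restrict]⟩
  rw [image_univ_of_surjective hsurj, card_univ, Fintype.card_pi]
  exact prod_coe_sort s fun i => Fintype.card (π i)

end Restrict

section Sorting

variable {α β : Type*} {le : α → α → Prop}

def SortsBy (le : α → α → Prop) (sortedOf : Finset α → List α) : Prop :=
  ∀ S, (sortedOf S).Pairwise le ∧ (sortedOf S).Nodup ∧ ∀ x, x ∈ sortedOf S ↔ x ∈ S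

variable [DecidableEq α] {sortedOf : Finset α → List α}

theorem SortsBy.toFinset_eq (h : SortsBy le sortedOf) (S : Finset α) :
    (sortedOf S).toFinset = S := by
  ext x
  rw [List.mem_toFinset, (h S).2.2]

theorem SortsBy.eq_filter [Fintype α] [Std.Antisymm le] (h : SortsBy le sortedOf) (S : Finset α) :
    sortedOf S = (sortedOf univ).filter (· ∈ S) := by
  refine List.Perm.eq_of_pairwise' (h S).1 ((h univ).1.sublist List.filter_sublist) ?_
  refine (List.perm_ext_iff_of_nodup (h S).2.1 ((h univ).2.1.filter _)).2 fun x => ?_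
  simp [(h S).2.2, (h univ).2.2]

theorem SortsBy.keyRuns_eq [DecidableEq β] {g : α → β} (h : SortsBy le sortedOf)
    (hg : ConvexFibers le g) (S : Finset α) : keyRuns g (sortedOf S) = #(S.image g) := by
  rw [keyRuns_eq_card_image hg (h S).1, h.toFinset_eq]

end Sorting

section Prefixes

variable {c : ℕ} {N : Fin c → ℕ}

/-- The `j`-prefix of a tuple `t` is encoded as `(initCols c j).restrict t`. -/
def initCols (c j : ℕ) : Finset (Fin c) := {k | (k : ℕ) < j}

theorem mem_initCols {j : ℕ} {k : Fin c} : k ∈ initCols c j ↔ (k : ℕ) < j := by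
  simp [initCols]

theorem initCols_succ (i : Fin c) : initCols c (i + 1) = insert i (initCols c i) := by
  ext k
  simp only [mem_initCols, mem_insert, Fin.ext_iff]
  omega

def numPrefixes (N : Fin c → ℕ) (j : ℕ) : ℕ := ∏ k ∈ initCols c j, N k

def prefixFiberCard (N : Fin c → ℕ) (j : ℕ) : ℕ := ∏ k ∈ (initCols c j)ᶜ, N k

noncomputable def expNumPrefixes (N : Fin c → ℕ) (p : ℝ) (j : ℕ) : ℝ :=
  numPrefixes N j * (1 - (1 - p) ^ prefixFiberCard N j)

theorem numPrefixes_mul_prefixFiberCard (N : Fin c → ℕ) (j : ℕ) :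
    numPrefixes N j * prefixFiberCard N j = ∏ k, N k :=
  prod_mul_prod_compl _ _

theorem numPrefixes_succ (N : Fin c → ℕ) (i : Fin c) :
    numPrefixes N (i + 1) = N i * numPrefixes N i := by
  rw [numPrefixes, initCols_succ, prod_insert (by simp [mem_initCols])]
  rfl

theorem prefixFiberCard_pos (hpos : ∀ k, 1 ≤ N k) (j : ℕ) : 0 < prefixFiberCard N j :=
  prod_pos fun k _ => hpos k

theorem card_prefix_fiber (j : ℕ) (x : ∀ k, Fin (N k)) :
    #{y | (initCols c j).restrict (π := fun k => Fin (N k)) y = (initCols c j).restrict x}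
      = prefixFiberCard N j := by
  convert card_restrict_fiber (initCols c j) x using 1
  simp [prefixFiberCard]

theorem card_image_prefix (hpos : ∀ k, 1 ≤ N k) (j : ℕ) :
    #(univ.image ((initCols c j).restrict (π := fun k => Fin (N k)))) = numPrefixes N j := by
  have : ∀ k, Nonempty (Fin (N k)) := fun k => ⟨⟨0, hpos k⟩⟩
  convert card_image_restrict (π := fun k => Fin (N k)) (initCols c j) using 1
  simp [numPrefixes]

theorem expVal_card_image_prefix (hpos : ∀ k, 1 ≤ N k) (p : ℝ) (j : ℕ) :
    expVal p (fun S : Finset (∀ k, Fin (N k)) => (#(S.image (initCols c j).restrict) : ℝ))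
      = expNumPrefixes N p j := by
  rw [expVal_card_image, expNumPrefixes, ← card_image_prefix hpos j, ← nsmul_eq_mul, ← sum_const]
  refine sum_congr rfl fun v hv => ?_
  obtain ⟨x, -, rfl⟩ := mem_image.1 hv
  rw [card_prefix_fiber]

theorem convexFibers_of_isRecursiveOrder {le : (∀ k, Fin (N k)) → (∀ k, Fin (N k)) → Prop}
    (h : IsRecursiveOrder N le) (j : ℕ) : ConvexFibers le (initCols c j).restrict := by
  intro x y z hxy hyz hxz
  simp only [restrict_eq_restrict_iff, mem_initCols] at hxz ⊢
  exact h j x y z hxy hyz hxz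

end Prefixes

section Seams

variable {c : ℕ} {N : Fin c → ℕ}

def seamRel (i : Fin c) (x y : ∀ k, Fin (N k)) : Bool :=
  decide (x i = y i ∧ ∃ j : Fin c, j < i ∧ x j ≠ y j)

theorem seamlessCol_eq_adjCount (i : Fin c) (l : List (∀ k, Fin (N k))) :
    seamlessCol i l = adjCount (seamRel i) l := by
  cases l <;> rfl

theorem restrict_initCols_succ_eq_iff (i : Fin c) {x y : ∀ k, Fin (N k)} :
    (initCols c (i + 1)).restrict x = (initCols c (i + 1)).restrict y
      ↔ x i = y i ∧ (initCols c i).restrict x = (initCols c i).restrict y := by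
  simp only [restrict_eq_restrict_iff, initCols_succ, forall_mem_insert]

/-- A new run of the `(i + 1)`-prefix starts either with a new run in column `i` or with a
seamless join there. -/
theorem runsCol_add_seamlessCol (i : Fin c) (l : List (∀ k, Fin (N k))) :
    runsCol i l + seamlessCol i l = keyRuns (initCols c (i + 1)).restrict l := by
  cases l with
  | nil => rfl
  | cons a l =>
    rw [seamlessCol_eq_adjCount, runsCol, keyRuns, add_assoc]
    congr 1
    rw [adjCount, adjCount, List.tail_cons, List.countP_add_countP_of_disjoint_s9 _ _
      fun ab => by simp [seamRel]; tauto]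
    refine List.countP_congr fun ab _ => ?_
    simp only [seamRel, Bool.or_eq_true, decide_eq_true_eq, ne_eq]
    rw [restrict_initCols_succ_eq_iff, restrict_eq_restrict_iff]
    simp only [mem_initCols, ← Fin.lt_def]
    by_cases h : ab.1 i = ab.2 i <;> simp [h]

end Seams

section SortedTables

variable {c : ℕ} {N : Fin c → ℕ} {p : ℝ} {le : (∀ k, Fin (N k)) → (∀ k, Fin (N k)) → Prop}
  {sortedOf : Finset (∀ k, Fin (N k)) → List (∀ k, Fin (N k))}

theorem expVal_runsCol_add_expVal_seamlessCol (hpos : ∀ k, 1 ≤ N k)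
    (hrec : IsRecursiveOrder N le) (hsort : SortsBy le sortedOf) (i : Fin c) :
    expVal p (fun S => (runsCol i (sortedOf S) : ℝ))
      + expVal p (fun S => (seamlessCol i (sortedOf S) : ℝ)) = expNumPrefixes N p (i + 1) := by
  rw [← expVal_add, ← expVal_card_image_prefix hpos]
  congr 1
  funext S
  rw [← Nat.cast_add, runsCol_add_seamlessCol,
    hsort.keyRuns_eq (convexFibers_of_isRecursiveOrder hrec _)]

theorem length_le_prefixFiberCard {j : ℕ} {l : List (∀ k, Fin (N k))} (hl : l.Nodup)
    (h : ∀ x ∈ l, ∀ y ∈ l, (initCols c j).restrict x = (initCols c j).restrict y) :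
    l.length ≤ prefixFiberCard N j := by
  cases l with
  | nil => exact Nat.zero_le _
  | cons z l =>
    rw [← card_prefix_fiber j z]
    exact hl.length_le_card_of_subset fun y hy => by simpa using h y hy z List.mem_cons_self

theorem exists_prefix_blocks (hpos : ∀ k, 1 ≤ N k) (hrec : IsRecursiveOrder N le)
    {L : List (∀ k, Fin (N k))} (hL : L.Pairwise le) (hnd : L.Nodup) (hmem : ∀ x, x ∈ L)
    (j : ℕ) :
    ∃ bs : List (List (∀ k, Fin (N k))), bs.flatten = L ∧ bs.length = numPrefixes N j ∧
      ∀ b ∈ bs, b.Nodup ∧ b.length = prefixFiberCard N j ∧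
        ∀ x ∈ b, ∀ y ∈ b, (initCols c j).restrict x = (initCols c j).restrict y := by
  obtain ⟨bs, rfl, hbs⟩ := exists_flatten_eq_fibers (convexFibers_of_isRecursiveOrder hrec j) hL hnd
  have hnd' := (List.nodup_flatten.1 hnd).1
  have hlen : ∀ b ∈ bs, b.length = prefixFiberCard N j := by
    intro b hb
    obtain ⟨x, -, hx⟩ := hbs b hb
    rw [← card_prefix_fiber j x]
    exact (hnd' b hb).length_eq_card fun y => by simp [hx y, hmem y]
  refine ⟨bs, rfl, ?_, fun b hb => ⟨hnd' b hb, hlen b hb, ?_⟩⟩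
  · have htotal : bs.flatten.length = ∏ k, N k := by
      rw [hnd.length_eq_card (F := univ) (by simp [hmem]), card_univ]
      simp
    rw [List.length_flatten, List.map_congr_left hlen, List.map_const', List.sum_replicate,
      smul_eq_mul, ← numPrefixes_mul_prefixFiberCard N j] at htotal
    exact Nat.eq_of_mul_eq_mul_right (prefixFiberCard_pos hpos j) htotal
  · obtain ⟨z, -, hz⟩ := hbs b hb
    intro x hx y hy
    rw [((hz x).1 hx).2, ((hz y).1 hy).2]

theorem expVal_seamlessCol_le (hpos : ∀ k, 1 ≤ N k) (hp0 : 0 < p) (hp1 : p ≤ 1)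
    [Std.Antisymm le] (hrec : IsRecursiveOrder N le) (hsort : SortsBy le sortedOf) (i : Fin c) :
    expVal p (fun S => (seamlessCol i (sortedOf S) : ℝ))
      ≤ numPrefixes N i * (1 - (1 - p) ^ prefixFiberCard N (i + 1)) := by
  obtain ⟨hL, hnd, hmem⟩ := hsort univ
  have hmem' : ∀ x, x ∈ sortedOf univ := fun x => (hmem x).2 (mem_univ x)
  obtain ⟨bs, hflat, hnum, hbs⟩ := exists_prefix_blocks hpos hrec hL hnd hmem' i
  have hfilter : ∀ S, seamlessCol i (sortedOf S)
      = adjCount (seamRel i) ((sortedOf univ).filter (· ∈ S)) := fun S => by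
    rw [← hsort.eq_filter, seamlessCol_eq_adjCount]
  simp_rw [hfilter]
  rw [expVal_eq_sublistExp p (fun L => (adjCount (seamRel i) L : ℝ)) hnd hmem', sublistExp_adjCount,
    ← hflat, ← hnum]
  refine expAdjCount_flatten_le hp0 hp1 (prefixFiberCard_pos hpos i).ne'
    (fun b hb => (hbs b hb).2.1) (fun x b hb => ?_) (fun b hb x hx y hy => ?_)
  · rw [List.countP_eq_length_filter]
    refine length_le_prefixFiberCard ((hbs b hb).1.filter _) fun y hy z hz => ?_
    simp only [List.mem_filter, seamRel, decide_eq_true_eq] at hy hz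
    rw [restrict_initCols_succ_eq_iff]
    exact ⟨hy.2.1.symm.trans hz.2.1, (hbs b hb).2.2 y hy.1 z hz.1⟩
  · have hxy := restrict_eq_restrict_iff.1 ((hbs b hb).2.2 x hx y hy)
    simp only [seamRel, decide_eq_false_iff_not, not_and, not_exists]
    exact fun _ j hj hne => hne (hxy j (mem_initCols.2 hj))

end SortedTables

section Comparison

variable {q : ℝ}

theorem nat_mul_pow_mul_one_sub_le (hq0 : 0 ≤ q) (hq1 : q ≤ 1) (n : ℕ) :
    n * q ^ n * (1 - q) ≤ 1 - q ^ n := by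
  have hgeom := geom_sum_mul q n
  have hsum := card_nsmul_le_sum (range n) (fun k => q ^ k) (q ^ n)
    fun k hk => pow_le_pow_of_le_one hq0 hq1 (mem_range.1 hk).le
  rw [card_range, nsmul_eq_mul] at hsum
  nlinarith

theorem nat_mul_one_sub_pow_le (hq0 : 0 ≤ q) (hq1 : q ≤ 1) {u v : ℕ} (hvu : v ≤ u) :
    v * (1 - q ^ u) ≤ u * (1 - q ^ v) := by
  induction u, hvu using Nat.le_induction with
  | base => exact le_rfl
  | succ u hvu ih =>
    have hstep : v * q ^ u * (1 - q) ≤ 1 - q ^ v :=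
      (mul_le_mul_of_nonneg_right (mul_le_mul_of_nonneg_left
        (pow_le_pow_of_le_one hq0 hq1 hvu) v.cast_nonneg) (sub_nonneg.2 hq1)).trans
        (nat_mul_pow_mul_one_sub_le hq0 hq1 v)
    push_cast
    rw [pow_succ]
    nlinarith

theorem mul_one_sub_pow_le_of_mul_eq (hq0 : 0 ≤ q) (hq1 : q ≤ 1) {a b u v : ℕ} (ha : 0 < a)
    (hv : 0 < v) (hab : a ≤ b) (h : a * u = b * v) :
    (a : ℝ) * (1 - q ^ u) ≤ b * (1 - q ^ v) := by
  have hvu : v ≤ u := Nat.le_of_mul_le_mul_left (h ▸ Nat.mul_le_mul_right v hab) ha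
  have hcast : (a : ℝ) * u = b * v := by exact_mod_cast h
  refine le_of_mul_le_mul_left ?_ (Nat.cast_pos.2 hv : (0 : ℝ) < v)
  calc (v : ℝ) * (a * (1 - q ^ u)) = a * (v * (1 - q ^ u)) := by ring
    _ ≤ a * (u * (1 - q ^ v)) :=
        mul_le_mul_of_nonneg_left (nat_mul_one_sub_pow_le hq0 hq1 hvu) a.cast_nonneg
    _ = v * (b * (1 - q ^ v)) := by linear_combination (1 - q ^ v) * hcast

end Comparison

section Permutation

variable {c : ℕ} {N : Fin c → ℕ}

theorem prod_initCols_card_le_prod (hmono : Monotone N) (K : Finset (Fin c)) :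
    ∏ k ∈ initCols c #K, N k ≤ ∏ k ∈ K, N k := by
  induction K using Finset.induction_on_max with
  | empty => simp [initCols]
  | insert a K hlt ih =>
    have haK : a ∉ K := fun h => lt_irrefl a (hlt a h)
    have hK : #K ≤ a := by
      simpa using card_le_card (fun x hx => mem_Iio.2 (hlt x hx) : K ⊆ Iio a)
    rw [card_insert_of_notMem haK, prod_insert haK]
    rw [initCols_succ ⟨#K, hK.trans_lt a.2⟩, prod_insert (by simp [mem_initCols])]
    exact Nat.mul_le_mul (hmono (Fin.le_def.2 hK)) ih

theorem numPrefixes_le_comp_perm (hmono : Monotone N) (σ : Equiv.Perm (Fin c)) (j : ℕ) :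
    numPrefixes N j ≤ numPrefixes (fun k => N (σ k)) j := by
  have hcard : initCols c #((initCols c j).map σ.toEmbedding) = initCols c j := by
    ext k
    simp only [card_map, initCols, Fin.card_filter_val_lt, mem_filter, mem_univ, true_and]
    have := k.2
    omega
  rw [numPrefixes, ← hcard]
  refine (prod_initCols_card_le_prod hmono _).trans_eq ?_
  rw [prod_map]
  rfl

theorem expNumPrefixes_le_comp_perm (hpos : ∀ k, 1 ≤ N k) (hmono : Monotone N) {p : ℝ}
    (hp0 : 0 ≤ p) (hp1 : p ≤ 1) (σ : Equiv.Perm (Fin c)) (j : ℕ) :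
    expNumPrefixes N p j ≤ expNumPrefixes (fun k => N (σ k)) p j := by
  refine mul_one_sub_pow_le_of_mul_eq (by linarith) (by linarith) (prod_pos fun k _ => hpos k)
    (prefixFiberCard_pos (fun k => hpos (σ k)) j) (numPrefixes_le_comp_perm hmono σ j) ?_
  rw [numPrefixes_mul_prefixFiberCard, numPrefixes_mul_prefixFiberCard]
  exact (Equiv.prod_comp σ N).symm

end Permutation

section RunCountBounds

variable {c : ℕ} {N : Fin c → ℕ} {p : ℝ} {le : (∀ k, Fin (N k)) → (∀ k, Fin (N k)) → Prop}
  {sortedOf : Finset (∀ k, Fin (N k)) → List (∀ k, Fin (N k))}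

theorem expVal_runCount :
    expVal p (fun S => (runCount (sortedOf S) : ℝ))
      = ∑ i, expVal p (fun S => (runsCol i (sortedOf S) : ℝ)) := by
  rw [← expVal_sum]
  simp [runCount]

theorem expVal_runCount_le (hpos : ∀ k, 1 ≤ N k) (hp0 : 0 ≤ p) (hp1 : p ≤ 1)
    (hrec : IsRecursiveOrder N le) (hsort : SortsBy le sortedOf) :
    expVal p (fun S => (runCount (sortedOf S) : ℝ)) ≤ ∑ i : Fin c, expNumPrefixes N p (i + 1) := by
  rw [expVal_runCount]
  refine sum_le_sum fun i _ => ?_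
  have hsum := expVal_runsCol_add_expVal_seamlessCol (p := p) hpos hrec hsort i
  have hseam := expVal_nonneg hp0 hp1 fun S => Nat.cast_nonneg (seamlessCol i (sortedOf S))
  linarith

theorem sub_one_mul_le_mul_expVal_runCount (hpos : ∀ k, 1 ≤ N k) (hp0 : 0 < p) (hp1 : p ≤ 1)
    [Std.Antisymm le] (hrec : IsRecursiveOrder N le) (hsort : SortsBy le sortedOf) {m : ℕ}
    (hm : ∀ k, m ≤ N k) :
    (m - 1) * ∑ i : Fin c, expNumPrefixes N p (i + 1)
      ≤ m * expVal p (fun S => (runCount (sortedOf S) : ℝ)) := by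
  rw [expVal_runCount, mul_sum, mul_sum]
  refine sum_le_sum fun i _ => ?_
  have hsum := expVal_runsCol_add_expVal_seamlessCol (p := p) hpos hrec hsort i
  have hseam := expVal_seamlessCol_le hpos hp0 hp1 hrec hsort i
  have hseam0 := expVal_nonneg hp0.le hp1 fun S => Nat.cast_nonneg (seamlessCol i (sortedOf S))
  have hexp : expNumPrefixes N p (i + 1)
      = N i * (numPrefixes N i * (1 - (1 - p) ^ prefixFiberCard N (i + 1))) := by
    rw [expNumPrefixes, numPrefixes_succ]
    push_cast
    ring
  have hmN : (m : ℝ) ≤ N i := by exact_mod_cast hm i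
  nlinarith [mul_le_mul_of_nonneg_right hmN hseam0,
    mul_le_mul_of_nonneg_left hseam (Nat.cast_nonneg (N i))]

end RunCountBounds

end RunCount

open RunCount in
theorem increasing_cardinality_asymptotically_optimal_general
    {c : ℕ} (hc : 0 < c) (N : Fin c → ℕ) (hpos : ∀ i, 1 ≤ N i) (hmono : Monotone N)
    (p : ℝ) (hp0 : 0 < p) (hp1 : p ≤ 1)
    (le : (∀ k : Fin c, Fin (N k)) → (∀ k : Fin c, Fin (N k)) → Prop)
    (hrec : IsRecursiveOrder N le)
    (sortedOf : Finset (∀ k : Fin c, Fin (N k)) → List (∀ k : Fin c, Fin (N k)))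
    (hsorted : ∀ S, (sortedOf S).Pairwise le ∧ (sortedOf S).Nodup ∧
      ∀ x, x ∈ sortedOf S ↔ x ∈ S)
    (σ : Equiv.Perm (Fin c))
    (le' : (∀ k : Fin c, Fin (N (σ k))) → (∀ k : Fin c, Fin (N (σ k))) → Prop)
    (hlin' : IsLinearOrder _ le') (hrec' : IsRecursiveOrder (fun k => N (σ k)) le')
    (sortedOf' : Finset (∀ k : Fin c, Fin (N (σ k))) → List (∀ k : Fin c, Fin (N (σ k))))
    (hsorted' : ∀ S, (sortedOf' S).Pairwise le' ∧ (sortedOf' S).Nodup ∧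
      ∀ x, x ∈ sortedOf' S ↔ x ∈ S) :
    (expVal p (fun S => (runCount (sortedOf S) : ℝ))
        - expVal p (fun S =>
            (runCount (sortedOf' (S.image (fun (t : ∀ k : Fin c, Fin (N k)) (k : Fin c) => t (σ k)))) : ℝ)))
      / expVal p (fun S => (runCount (sortedOf S) : ℝ))
      ≤ 1 / (N ⟨0, hc⟩ : ℝ) := by
  have hperm : Function.Bijective fun (t : ∀ k, Fin (N k)) k => t (σ k) :=
    (Equiv.piCongrLeft' (fun k => Fin (N k)) σ.symm).bijective
  rw [expVal_comp_image p hperm fun S => (runCount (sortedOf' S) : ℝ)]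
  have hR0 := expVal_nonneg hp0.le hp1 fun S => Nat.cast_nonneg (runCount (sortedOf S))
  have hR := expVal_runCount_le hpos hp0.le hp1 hrec hsorted
  have hA : ∑ i : Fin c, expNumPrefixes N p (i + 1)
      ≤ ∑ i : Fin c, expNumPrefixes (fun k => N (σ k)) p (i + 1) :=
    sum_le_sum fun i _ => expNumPrefixes_le_comp_perm hpos hmono hp0.le hp1 σ _
  have hR' := sub_one_mul_le_mul_expVal_runCount (fun k => hpos (σ k)) hp0 hp1 hrec' hsorted'
    fun k => hmono (Fin.le_def.2 (Nat.zero_le (σ k)) : ⟨0, hc⟩ ≤ σ k)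
  have hm : (1 : ℝ) ≤ N ⟨0, hc⟩ := by exact_mod_cast hpos _
  rcases hR0.eq_or_lt with hRzero | hRpos
  · rw [← hRzero, div_zero]
    positivity
  · rw [div_le_div_iff₀ hRpos (by linarith)]
    nlinarith

/-- Let `N_1 ≤ … ≤ N_c` (with minimum `m = N_1`) and `p ∈ (0,1]`. Let `R↑` be the
expected RunCount of a uniformly distributed random table with density `p`
sorted by any recursive order with the columns in increasing cardinality, and
let `R'` be the expected RunCount of the `σ`-permuted table sorted by any
recursive order on the permuted tuple space. Then `(R↑ − R')/R↑ ≤ 1/m`; since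
this holds for all `σ` and recursive orders, `(R↑ − R_opt)/R↑ ≤ 1/m`. -/
theorem increasing_cardinality_asymptotically_optimal
    {c : ℕ} (hc : 0 < c) (N : Fin c → ℕ) (hpos : ∀ i, 1 ≤ N i) (hmono : Monotone N)
    (p : ℝ) (hp0 : 0 < p) (hp1 : p ≤ 1)
    (le : (∀ k : Fin c, Fin (N k)) → (∀ k : Fin c, Fin (N k)) → Prop)
    (hlin : IsLinearOrder _ le) (hrec : IsRecursiveOrder N le)
    (sortedOf : Finset (∀ k : Fin c, Fin (N k)) → List (∀ k : Fin c, Fin (N k)))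
    (hsorted : ∀ S, (sortedOf S).Pairwise le ∧ (sortedOf S).Nodup ∧
      ∀ x, x ∈ sortedOf S ↔ x ∈ S)
    (σ : Equiv.Perm (Fin c))
    (le' : (∀ k : Fin c, Fin (N (σ k))) → (∀ k : Fin c, Fin (N (σ k))) → Prop)
    (hlin' : IsLinearOrder _ le') (hrec' : IsRecursiveOrder (fun k => N (σ k)) le')
    (sortedOf' : Finset (∀ k : Fin c, Fin (N (σ k))) → List (∀ k : Fin c, Fin (N (σ k))))
    (hsorted' : ∀ S, (sortedOf' S).Pairwise le' ∧ (sortedOf' S).Nodup ∧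
      ∀ x, x ∈ sortedOf' S ↔ x ∈ S) :
    (expVal p (fun S => (runCount (sortedOf S) : ℝ))
        - expVal p (fun S =>
            (runCount (sortedOf' (S.image (fun (t : ∀ k : Fin c, Fin (N k)) (k : Fin c) => t (σ k)))) : ℝ)))
      / expVal p (fun S => (runCount (sortedOf S) : ℝ))
      ≤ 1 / (N ⟨0, hc⟩ : ℝ) :=
  increasing_cardinality_asymptotically_optimal_general hc N hpos hmono p hp0 hp1 le hrec sortedOf
    hsorted σ le' hlin' hrec' sortedOf' hsorted'
end

section
/- Fix an integer N ≥ 2. For c ≥ 1, let L(c) = (N^{c+1} − 1)/(N − 1) − 1 (the RunCount of the complete c-column table with all column cardinalities N sorted lexicographically) and G(c) = N^c + c − 1 (its RunCount under any Gray-code order). Then the relative benefit g(c) = (L(c) − G(c))/L(c) is monotonically increasing in c, satisfies g(c) < 1/N for all c ≥ 1, and converges to 1/N as c → ∞. -/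
/-!
Writing `x = N`, one has `L(c) = x (x^c - 1)/(x - 1)`, so that
`g(c) = 1/x - (x - 1)/x · c/(x^c - 1)`. Everything then reduces to the sequence
`c/(x^c - 1)`: it is positive, it decreases for `c ≥ 1` because `x^c - 1` is convex in `c`
and vanishes at `0` (concretely `x^c - 1 ≤ c x^c (x - 1)`), and it tends to `0` since
exponentials beat linear functions.
-/

open Filter Topology

section

variable {x : ℝ}

theorem pow_sub_one_le_mul_pow_mul_sub_one (hx : 1 ≤ x) (n : ℕ) :
    x ^ n - 1 ≤ n * x ^ n * (x - 1) := by
  induction n with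
  | zero => simp
  | succ n ih =>
    have hxn : 1 ≤ x ^ n * x := one_le_mul_of_one_le_of_one_le (one_le_pow₀ hx) hx
    push_cast
    rw [pow_succ]
    nlinarith [mul_le_mul_of_nonneg_right ih (by linarith : (0 : ℝ) ≤ x),
      mul_le_mul_of_nonneg_right hxn (by linarith : (0 : ℝ) ≤ x - 1)]

theorem antitoneOn_div_pow_sub_one (hx : 1 < x) :
    AntitoneOn (fun n : ℕ => (n : ℝ) / (x ^ n - 1)) (Set.Ici 1) := by
  refine antitoneOn_nat_Ici_of_succ_le fun n hn => ?_
  have hpos : ∀ m : ℕ, 1 ≤ m → 0 < x ^ m - 1 := fun m hm =>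
    sub_pos.2 (one_lt_pow₀ hx (by omega))
  rw [div_le_div_iff₀ (hpos _ (by omega)) (hpos n hn)]
  have := pow_sub_one_le_mul_pow_mul_sub_one hx.le n
  push_cast
  rw [pow_succ]
  nlinarith

theorem tendsto_div_pow_sub_one (hx : 1 < x) :
    Tendsto (fun n : ℕ => (n : ℝ) / (x ^ n - 1)) atTop (𝓝 0) := by
  have hlin : Tendsto (fun n : ℕ => (n : ℝ) / x ^ n) atTop (𝓝 0) := by
    simpa using tendsto_pow_const_div_const_pow_of_one_lt 1 hx
  have hden : Tendsto (fun n : ℕ => 1 - (x ^ n)⁻¹) atTop (𝓝 1) := by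
    simpa using (tendsto_inv_atTop_zero.comp (tendsto_pow_atTop_atTop_of_one_lt hx)).const_sub 1
  have hquot := hlin.div hden one_ne_zero
  rw [zero_div] at hquot
  refine hquot.congr fun n => ?_
  have hxn : x ^ n ≠ 0 := pow_ne_zero n (by linarith)
  rw [Pi.div_apply]
  field_simp

theorem lex_gray_relative_benefit_eq (hx : 1 < x) {c : ℕ} (hc : 1 ≤ c) :
    (((x ^ (c + 1) - 1) / (x - 1) - 1) - (x ^ c + c - 1)) / ((x ^ (c + 1) - 1) / (x - 1) - 1) =
      1 / x - (x - 1) / x * (c / (x ^ c - 1)) := by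
  have hxc : x ^ c - 1 ≠ 0 := (sub_pos.2 (one_lt_pow₀ hx (by omega))).ne'
  have hx1 : x - 1 ≠ 0 := (sub_pos.2 hx).ne'
  have hx0 : x ≠ 0 := by positivity
  have hL : (x ^ (c + 1) - 1) / (x - 1) - 1 = x * (x ^ c - 1) / (x - 1) := by
    field_simp
    ring
  rw [hL]
  field_simp
  ring

end

/-- For a complete `c`-column table with all column cardinalities `N ≥ 2`, with
`L(c) = (N^{c+1} − 1)/(N − 1) − 1` its lexicographic RunCount and
`G(c) = N^c + c − 1` its Gray-code RunCount, the relative benefit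
`g(c) = (L(c) − G(c))/L(c)` is monotonically increasing in `c ≥ 1`, is always
less than `1/N`, and converges to `1/N` as `c → ∞`. -/
theorem gray_relative_benefit (N : ℕ) (hN : 2 ≤ N) :
    let L : ℕ → ℝ := fun c => ((N : ℝ) ^ (c + 1) - 1) / ((N : ℝ) - 1) - 1
    let G : ℕ → ℝ := fun c => (N : ℝ) ^ c + (c : ℝ) - 1
    let g : ℕ → ℝ := fun c => (L c - G c) / L c
    (∀ c₁ c₂ : ℕ, 1 ≤ c₁ → c₁ ≤ c₂ → g c₁ ≤ g c₂) ∧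
    (∀ c : ℕ, 1 ≤ c → g c < 1 / (N : ℝ)) ∧
    Filter.Tendsto g Filter.atTop (nhds (1 / (N : ℝ))) := by
  intro L G g
  have hN1 : (1 : ℝ) < N := by exact_mod_cast hN
  have hk : 0 < ((N : ℝ) - 1) / N := div_pos (by linarith) (by linarith)
  have hg : ∀ c, 1 ≤ c → g c = 1 / N - ((N : ℝ) - 1) / N * (c / ((N : ℝ) ^ c - 1)) :=
    fun c hc => lex_gray_relative_benefit_eq hN1 hc
  refine ⟨fun c₁ c₂ h₁ h₁₂ => ?_, fun c hc => ?_, ?_⟩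
  · rw [hg c₁ h₁, hg c₂ (h₁.trans h₁₂)]
    have hφ :=
      antitoneOn_div_pow_sub_one hN1 (Set.mem_Ici.2 h₁) (Set.mem_Ici.2 (h₁.trans h₁₂)) h₁₂
    gcongr
  · rw [hg c hc]
    have hφ : (0 : ℝ) < c / ((N : ℝ) ^ c - 1) :=
      div_pos (by exact_mod_cast hc) (sub_pos.2 (one_lt_pow₀ hN1 (by omega)))
    exact sub_lt_self _ (mul_pos hk hφ)
  · have hlim := ((tendsto_div_pow_sub_one hN1).const_mul (((N : ℝ) - 1) / N)).const_sub
      (1 / (N : ℝ))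
    rw [mul_zero, sub_zero] at hlim
    exact hlim.congr' (eventually_atTop.2 ⟨1, fun c hc => (hg c hc).symm⟩)
end

section
/- Let c ≥ 1 and let N_1,…,N_c be integers with N_i ≥ 2 for all i. In the list of all ∏_{i=1}^c N_i tuples of ∏_{i=1}^c {1,…,N_i} sorted in lexicographic order, the number of runs in column j equals ∏_{i=1}^{j} N_i for every j ∈ {1,…,c}; consequently the RunCount of this list equals ∑_{j=1}^c ∏_{i=1}^{j} N_i. -/
/-- The lexicographic order on tuples: compare at the first differing component. -/
def lexLe {c : ℕ} {N : Fin c → ℕ} (a b : ∀ k : Fin c, Fin (N k)) : Prop :=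
  a = b ∨ ∃ j : Fin c, (∀ i : Fin c, i < j → a i = b i) ∧ a j < b j

/-!
Consecutive rows `a, b` of a lexicographically sorted list containing every tuple form a
covering pair of the lexicographic order: if they first differ at `k`, every later coordinate
of `a` is maximal and every later coordinate of `b` minimal, since otherwise bumping that
coordinate would produce a tuple strictly between them. As `N i ≥ 2`, consecutive rows thus
differ in column `j` exactly when their prefixes `(x i)_{i ≤ j}` differ. The lexicographic order
is recursive, so each prefix occupies a contiguous block of the list, and the number of runs in
column `j` is the number of distinct prefixes, `∏_{i ≤ j} N i`.
-/

namespace List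

variable {α β : Type*}

theorem countP_zip_tail_congr {l : List α} {p q : α × α → Bool}
    (h : l.IsChain fun a b => p (a, b) = q (a, b)) :
    (l.zip l.tail).countP p = (l.zip l.tail).countP q := by
  induction h with
  | nil | singleton => rfl
  | cons_cons hab _ ih => simp_all [countP_cons]

theorem isChain_wcovBy_of_pairwise_le [PartialOrder α] {l : List α}
    (hl : l.Pairwise (· ≤ ·)) (hall : ∀ x, x ∈ l) : l.IsChain (· ⩿ ·) := by
  refine isChain_iff_forall_rel_of_append_cons_cons.mpr fun a b l₁ l₂ hl' => ?_
  subst hl'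
  obtain ⟨-, hl₂, hl₁⟩ := pairwise_append.mp hl
  obtain ⟨ha, hb⟩ := pairwise_cons.mp hl₂
  refine ⟨ha b (.head _), fun x hax hxb => ?_⟩
  have hx := hall x
  simp only [mem_append, mem_cons] at hx
  rcases hx with hx | rfl | rfl | hx
  · exact (hl₁ x hx a (.head _)).not_gt hax
  · exact hax.false
  · exact hxb.false
  · exact ((pairwise_cons.mp hb).1 x hx).not_gt hxb

theorem card_toFinset_map_eq_one_add_countP_zip_tail [DecidableEq β] {r : α → α → Prop}
    {f : α → β} (hf : ∀ ⦃a b x⦄, r a b → r b x → f a = f x → f b = f a) :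
    ∀ {l : List α}, l.Pairwise r → l ≠ [] →
      (l.map f).toFinset.card = 1 + (l.zip l.tail).countP (fun ab => f ab.1 ≠ f ab.2)
  | [a], _, _ => by simp
  | a :: b :: l, hl, _ => by
    obtain ⟨hal, hbl⟩ := pairwise_cons.mp hl
    have hmem : f a ∈ ((b :: l).map f).toFinset ↔ f a = f b := by
      refine ⟨fun h => ?_, fun h => by simp [h]⟩
      obtain ⟨x, hx, hfx⟩ := List.mem_map.mp (List.mem_toFinset.mp h)
      rcases mem_cons.mp hx with rfl | hx
      · exact hfx.symm
      · exact (hf (hal b (.head _)) ((pairwise_cons.mp hbl).1 x hx) hfx.symm).symm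
    have ih := card_toFinset_map_eq_one_add_countP_zip_tail hf hbl (cons_ne_nil b l)
    rw [map_cons, toFinset_cons, Finset.card_insert_eq_ite, ih, tail_cons, tail_cons,
      zip_cons_cons, countP_cons]
    by_cases hab : f a = f b
    · rw [if_pos (hmem.mpr hab)]
      simp [hab]
    · rw [if_neg (mt hmem.mp hab)]
      simp [hab, Nat.add_assoc]

end List

theorem Finset.restrict_surjective {ι : Type*} {π : ι → Type*} [∀ i, Nonempty (π i)]
    (s : Finset ι) : Function.Surjective (s.restrict (π := π)) := by
  classical
  intro g
  exact ⟨fun i => if h : i ∈ s then g ⟨i, h⟩ else Classical.arbitrary _, by ext; simp⟩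

namespace Pi

variable {ι : Type*} {β : ι → Type*} [LinearOrder ι] [WellFoundedLT ι]
  [∀ i, LinearOrder (β i)] {a b : ∀ i, β i} {i j : ι}

theorem isMax_apply_of_toLex_covBy (h : toLex a ⋖ toLex b) (hi : ∀ k < i, a k = b k)
    (hab : a i < b i) (hij : i < j) : IsMax (a j) := by
  by_contra hmax
  obtain ⟨y, hy⟩ := not_isMax_iff.mp hmax
  refine h.2 (c := toLex (Function.update a j y)) (lt_toLex_update_self_iff.mpr hy)
    ⟨i, fun k hk => ?_, ?_⟩
  · show Function.update a j y k = b k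
    rw [Function.update_of_ne (hk.trans hij).ne]
    exact hi k hk
  · show Function.update a j y i < b i
    rwa [Function.update_of_ne hij.ne]

theorem isMin_apply_of_toLex_covBy (h : toLex a ⋖ toLex b) (hi : ∀ k < i, a k = b k)
    (hab : a i < b i) (hij : i < j) : IsMin (b j) := by
  by_contra hmin
  obtain ⟨y, hy⟩ := not_isMin_iff.mp hmin
  refine h.2 (c := toLex (Function.update b j y)) ⟨i, fun k hk => ?_, ?_⟩
    (toLex_update_lt_self_iff.mpr hy)
  · show a k = Function.update b j y k
    rw [Function.update_of_ne (hk.trans hij).ne]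
    exact hi k hk
  · show a i < Function.update b j y i
    rwa [Function.update_of_ne hij.ne]

theorem apply_ne_of_toLex_wcovBy [∀ i, Nontrivial (β i)] (h : toLex a ⩿ toLex b)
    (hij : i ≤ j) (hi : a i ≠ b i) : a j ≠ b j := by
  obtain hab | h := wcovBy_iff_eq_or_covBy.mp h
  · exact absurd (congrFun (toLex.injective hab) i) hi
  obtain ⟨k, hk, hlt⟩ := h.lt
  have hki : k ≤ i := not_lt.mp fun hik => hi (hk i hik)
  obtain hkj | rfl := (hki.trans hij).lt_or_eq
  · intro hj
    exact (isMax_apply_of_toLex_covBy h hk hlt hkj).not_isMin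
      (hj ▸ isMin_apply_of_toLex_covBy h hk hlt hkj)
  · exact hlt.ne

theorem apply_ne_iff_restrict_Iic_ne_of_toLex_wcovBy [LocallyFiniteOrderBot ι]
    [∀ i, Nontrivial (β i)] (h : toLex a ⩿ toLex b) :
    a j ≠ b j ↔ (Finset.Iic j).restrict a ≠ (Finset.Iic j).restrict b := by
  refine ⟨fun hj hr => hj (congrFun hr ⟨j, Finset.mem_Iic.mpr le_rfl⟩), fun hr => ?_⟩
  obtain ⟨⟨i, hi⟩, hne⟩ := Function.ne_iff.mp hr
  exact apply_ne_of_toLex_wcovBy h (Finset.mem_Iic.mp hi) hne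

end Pi

section LexTable

variable {c : ℕ} {N : Fin c → ℕ}

theorem lexLe_iff_toLex_le {a b : ∀ k : Fin c, Fin (N k)} : lexLe a b ↔ toLex a ≤ toLex b :=
  Iff.rfl

theorem isRecursiveOrder_lexLe : IsRecursiveOrder N lexLe := by
  intro j a b d hab hbd had i hi
  by_contra hba
  obtain rfl | ⟨k, hk, hlt⟩ := hab
  · exact hba rfl
  have hkj : (k : ℕ) < j := lt_of_le_of_lt (not_lt.mp fun hik => hba (hk i hik).symm) hi
  have hdb : toLex d < toLex b :=
    ⟨k, fun m hm => (had m (Nat.lt_trans hm hkj)).symm.trans (hk m hm),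
      show d k < b k from had k hkj ▸ hlt⟩
  exact hdb.not_ge (lexLe_iff_toLex_le.mp hbd)

theorem restrict_Iic_eq_of_lexLe (j : Fin c) ⦃a b d : ∀ k : Fin c, Fin (N k)⦄
    (hab : lexLe a b) (hbd : lexLe b d)
    (had : (Finset.Iic j).restrict a = (Finset.Iic j).restrict d) :
    (Finset.Iic j).restrict b = (Finset.Iic j).restrict a := by
  ext ⟨i, hi⟩
  refine congrArg Fin.val (isRecursiveOrder_lexLe (j + 1) a b d hab hbd (fun k hk => ?_) i ?_)
  · exact congrFun had ⟨k, Finset.mem_Iic.mpr (Nat.lt_succ_iff.mp hk)⟩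
  · exact Nat.lt_succ_of_le (Fin.le_iff_val_le_val.mp (Finset.mem_Iic.mp hi))

theorem runsCol_eq_prod_of_pairwise_lexLe (hN : ∀ i, 2 ≤ N i)
    {L : List (∀ k : Fin c, Fin (N k))} (hs : L.Pairwise lexLe) (hall : ∀ x, x ∈ L)
    (j : Fin c) : runsCol j L = ∏ i ∈ Finset.Iic j, N i := by
  have : ∀ i, Nontrivial (Fin (N i)) := fun i => Fin.nontrivial_iff_two_le.mpr (hN i)
  obtain ⟨a, l, rfl⟩ :=
    List.exists_cons_of_ne_nil (List.ne_nil_of_mem (hall (Classical.arbitrary _)))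
  have hchain : (a :: l).IsChain fun x y => toLex x ⩿ toLex y :=
    (List.isChain_map toLex).mp <| List.isChain_wcovBy_of_pairwise_le (List.pairwise_map.mpr hs)
      fun x => List.mem_map.mpr ⟨ofLex x, hall _, rfl⟩
  calc runsCol j (a :: l)
      = 1 + ((a :: l).zip (a :: l).tail).countP (fun xy => xy.1 j ≠ xy.2 j) := rfl
    _ = 1 + ((a :: l).zip (a :: l).tail).countP
          (fun xy => (Finset.Iic j).restrict xy.1 ≠ (Finset.Iic j).restrict xy.2) := by
      congr 1
      exact List.countP_zip_tail_congr (hchain.imp fun x y hxy => decide_eq_decide.mpr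
        (Pi.apply_ne_iff_restrict_Iic_ne_of_toLex_wcovBy hxy))
    _ = ((a :: l).map (Finset.Iic j).restrict).toFinset.card :=
      (List.card_toFinset_map_eq_one_add_countP_zip_tail (restrict_Iic_eq_of_lexLe j) hs
        (List.cons_ne_nil a l)).symm
    _ = ∏ i ∈ Finset.Iic j, N i := by
      have hsurj : ((a :: l).map (Finset.Iic j).restrict).toFinset = Finset.univ :=
        Finset.eq_univ_of_forall fun g =>
          have ⟨x, hx⟩ := Finset.restrict_surjective _ g
          List.mem_toFinset.mpr (List.mem_map.mpr ⟨x, hall x, hx⟩)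
      rw [hsurj, Finset.card_univ, Fintype.card_pi]
      simp only [Fintype.card_fin]
      exact Finset.prod_coe_sort _ _

end LexTable

theorem lex_complete_table_runs_general {c : ℕ} {N : Fin c → ℕ}
    (hN : ∀ i, 2 ≤ N i) (L : List (∀ k : Fin c, Fin (N k)))
    (hs : L.Pairwise lexLe) (hall : ∀ x, x ∈ L) :
    (∀ j : Fin c, runsCol j L = ∏ i ∈ Finset.Iic j, N i) ∧
    runCount L = ∑ j : Fin c, ∏ i ∈ Finset.Iic j, N i := by
  have hcol := runsCol_eq_prod_of_pairwise_lexLe hN hs hall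
  exact ⟨hcol, Finset.sum_congr rfl fun j _ => hcol j⟩

/-- In the lexicographically sorted list of all tuples of `∏ i, {1,…,N_i}` (all
`N_i ≥ 2`), the number of runs in column `j` equals `∏_{i ≤ j} N_i`, so the
RunCount equals `∑_j ∏_{i ≤ j} N_i`. -/
theorem lex_complete_table_runs {c : ℕ} (hc : 1 ≤ c) {N : Fin c → ℕ}
    (hN : ∀ i, 2 ≤ N i) (L : List (∀ k : Fin c, Fin (N k)))
    (hs : L.Pairwise lexLe) (hnd : L.Nodup) (hall : ∀ x, x ∈ L) :
    (∀ j : Fin c, runsCol j L = ∏ i ∈ Finset.Iic j, N i) ∧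
    runCount L = ∑ j : Fin c, ∏ i ∈ Finset.Iic j, N i :=
  lex_complete_table_runs_general hN L hs hall
end

section
/- Let c ≥ 1 and let N_1,…,N_c be positive integers, and let ⪯ be a recursive Gray-code order on ∏_{i=1}^c {1,…,N_i}. Then in the ⪯-sorted list of all ∏_{i=1}^c N_i tuples, the number of runs in column j equals 1 + (N_j − 1)·∏_{i=1}^{j−1} N_i for every j ∈ {1,…,c}. -/
namespace List

variable {β : Type*}

/-- Equal entries of the list occupy one contiguous block. -/
def Clustered (l : List β) : Prop :=
  ∀ a b d, [a, b, d] <+ l → a = d → b = a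

theorem Clustered.of_cons {a : β} {l : List β} (h : (a :: l).Clustered) : l.Clustered :=
  fun x y z hsub => h x y z (hsub.cons a)

theorem Clustered.countP_zip_tail_ne_add_one [DecidableEq β] {l : List β} (h : l.Clustered)
    (hl : l ≠ []) : (l.zip l.tail).countP (fun p => p.1 ≠ p.2) + 1 = l.toFinset.card := by
  induction l with
  | nil => exact absurd rfl hl
  | cons a t ih =>
    rcases t with _ | ⟨b, t⟩
    · simp
    have ih := ih h.of_cons (cons_ne_nil b t)
    rw [show (a :: b :: t).zip (a :: b :: t).tail = (a, b) :: (b :: t).zip (b :: t).tail from rfl,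
      countP_cons]
    by_cases hab : a = b
    · subst hab
      simpa using ih
    · have ha : a ∉ b :: t := by
        rintro (_ | ⟨_, hat⟩)
        · exact hab rfl
        · exact hab (h a b a ((singleton_sublist.2 hat).cons_cons b |>.cons_cons a) rfl).symm
      rw [toFinset_cons, Finset.card_insert_of_notMem (by simpa using ha), ← ih]
      simp [hab]

theorem IsChain.rel_of_mem_zip_tail {R : β → β → Prop} :
    ∀ {l : List β}, l.IsChain R → ∀ p ∈ l.zip l.tail, R p.1 p.2
  | [], _, _, hp | [_], _, _, hp => by simp at hp
  | a :: b :: t, h, p, hp => by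
    rw [isChain_cons_cons] at h
    rcases mem_cons.1 hp with rfl | hp
    · exact h.1
    · exact h.2.rel_of_mem_zip_tail p hp

theorem countP_eq_countP_add_countP {p q r : β → Bool} {l : List β}
    (h : ∀ x ∈ l, (p x ↔ q x ∨ r x) ∧ ¬(q x ∧ r x)) :
    l.countP p = l.countP q + l.countP r := by
  induction l with
  | nil => rfl
  | cons a t ih =>
    have ht := ih fun x hx => h x (mem_cons_of_mem a hx)
    obtain ⟨hp, hqr⟩ := h a mem_cons_self
    simp only [countP_cons, ht]
    cases hq : q a <;> cases hr : r a <;> simp_all <;> omega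

end List

namespace Finset

variable {ι : Type*} {α : ι → Type*}

theorem restrict_eq_restrict_iff (s : Finset ι) {x y : ∀ i, α i} :
    s.restrict x = s.restrict y ↔ ∀ i ∈ s, x i = y i := by
  simp [funext_iff]

theorem restrict_surjective_s17 [∀ i, Nonempty (α i)] (s : Finset ι) :
    Function.Surjective (s.restrict (π := α)) := by
  classical
  intro y
  refine ⟨fun i => if h : i ∈ s then y ⟨i, h⟩ else Classical.arbitrary _, ?_⟩
  funext ⟨i, hi⟩
  simp [hi]

variable [DecidableEq ι] [∀ i, DecidableEq (α i)]

theorem countP_restrict_ne_add_one [∀ i, Fintype (α i)] [∀ i, Nonempty (α i)] (s : Finset ι)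
    {L : List (∀ i, α i)} (hall : ∀ x, x ∈ L) (hcl : (L.map s.restrict).Clustered) :
    (L.zip L.tail).countP (fun p => s.restrict p.1 ≠ s.restrict p.2) + 1 =
      ∏ i ∈ s, Fintype.card (α i) := by
  have hL : L.map s.restrict ≠ [] :=
    List.ne_nil_of_mem (List.mem_map_of_mem (hall fun _ => Classical.arbitrary _))
  have hrange : (L.map s.restrict).toFinset = univ := by
    rw [eq_univ_iff_forall]
    intro y
    obtain ⟨x, rfl⟩ := s.restrict_surjective_s17 y
    simpa using ⟨x, hall x, rfl⟩
  rw [← prod_coe_sort, ← Fintype.card_pi, ← card_univ, ← hrange,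
    ← hcl.countP_zip_tail_ne_add_one hL, ← List.map_tail, List.zip_map, List.countP_map]
  rfl

theorem countP_restrict_insert_ne {j : ι} {s : Finset ι} (hj : j ∉ s)
    {P : List ((∀ i, α i) × (∀ i, α i))} (hgray : ∀ p ∈ P, ∃! i, p.1 i ≠ p.2 i) :
    P.countP (fun p => (insert j s).restrict p.1 ≠ (insert j s).restrict p.2) =
      P.countP (fun p => p.1 j ≠ p.2 j) +
        P.countP (fun p => s.restrict p.1 ≠ s.restrict p.2) := by
  refine List.countP_eq_countP_add_countP fun p hp => ⟨?_, ?_⟩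
  · simp [restrict_eq_restrict_iff]
  obtain ⟨i₀, -, huniq⟩ := hgray p hp
  rintro ⟨hpj, hps⟩
  obtain ⟨i, his, hpi⟩ : ∃ i ∈ s, p.1 i ≠ p.2 i := by simpa [restrict_eq_restrict_iff] using hps
  exact hj (huniq j (of_decide_eq_true hpj) ▸ huniq i hpi ▸ his)

end Finset

section RecursiveOrder

variable {c : ℕ} {N : Fin c → ℕ}

theorem runsCol_of_ne_nil (i : Fin c) {L : List (∀ k : Fin c, Fin (N k))} (hL : L ≠ []) :
    runsCol i L = 1 + (L.zip L.tail).countP (fun p => p.1 i ≠ p.2 i) := by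
  cases L with
  | nil => exact absurd rfl hL
  | cons a l => rfl

theorem IsRecursiveOrder.clustered_map_restrict
    {le : (∀ k : Fin c, Fin (N k)) → (∀ k : Fin c, Fin (N k)) → Prop}
    (hrec : IsRecursiveOrder N le) {L : List (∀ k : Fin c, Fin (N k))} (hs : L.Pairwise le)
    {m : ℕ} {s : Finset (Fin c)} (hm : ∀ i, i ∈ s ↔ (i : ℕ) < m) :
    (L.map s.restrict).Clustered := by
  intro x y z hsub hxz
  obtain ⟨l', hl', hmap⟩ := List.sublist_map_iff.1 hsub
  rcases l' with _ | ⟨a, _ | ⟨b, _ | ⟨d, _ | _⟩⟩⟩ <;> simp only [List.map_cons, List.map_nil,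
    List.cons.injEq, reduceCtorEq, and_false, and_true] at hmap
  obtain ⟨rfl, rfl, rfl⟩ := hmap
  have habd := hs.sublist hl'
  simp only [List.pairwise_cons, List.mem_cons, List.not_mem_nil, forall_eq_or_imp,
    List.Pairwise.nil] at habd
  simp only [Finset.restrict_eq_restrict_iff, hm] at hxz ⊢
  exact hrec m a b d habd.1.1 habd.2.1.1 hxz

end RecursiveOrder

theorem recursive_gray_complete_table_runs_general {c : ℕ} {N : Fin c → ℕ}
    (hN : ∀ i, 1 ≤ N i)
    (le : (∀ k : Fin c, Fin (N k)) → (∀ k : Fin c, Fin (N k)) → Prop)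
    (hrec : IsRecursiveOrder N le)
    (L : List (∀ k : Fin c, Fin (N k)))
    (hs : L.Pairwise le) (hall : ∀ x, x ∈ L)
    (hgray : L.Chain' (fun a b => ∃! i : Fin c, a i ≠ b i)) :
    ∀ j : Fin c, runsCol j L = 1 + (N j - 1) * ∏ i ∈ Finset.Iio j, N i := by
  intro j
  have : ∀ k, Nonempty (Fin (N k)) := fun k => ⟨⟨0, hN k⟩⟩
  have hL : L ≠ [] := List.ne_nil_of_mem (hall fun _ => Classical.arbitrary _)
  have hlt := Finset.countP_restrict_ne_add_one _ hall
    (hrec.clustered_map_restrict hs (m := j) (s := Finset.Iio j) (by simp))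
  have hle := Finset.countP_restrict_ne_add_one _ hall
    (hrec.clustered_map_restrict hs (m := j + 1) (s := insert j (Finset.Iio j))
      (by simp))
  rw [Finset.countP_restrict_insert_ne Finset.notMem_Iio_self hgray.rel_of_mem_zip_tail,
    Finset.prod_insert Finset.notMem_Iio_self] at hle
  simp only [Fintype.card_fin] at hlt hle
  rw [runsCol_of_ne_nil j hL, Nat.sub_one_mul]
  omega

/-- For a recursive Gray-code order (a recursive linear order whose sorted
enumeration of all tuples has consecutive tuples differing in exactly one
component), the number of runs in column `j` of the sorted enumeration of all
tuples equals `1 + (N_j − 1)·∏_{i < j} N_i`. -/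
theorem recursive_gray_complete_table_runs {c : ℕ} (hc : 1 ≤ c) {N : Fin c → ℕ}
    (hN : ∀ i, 1 ≤ N i)
    (le : (∀ k : Fin c, Fin (N k)) → (∀ k : Fin c, Fin (N k)) → Prop)
    (hlin : IsLinearOrder _ le) (hrec : IsRecursiveOrder N le)
    (L : List (∀ k : Fin c, Fin (N k)))
    (hs : L.Pairwise le) (hnd : L.Nodup) (hall : ∀ x, x ∈ L)
    (hgray : L.Chain' (fun a b => ∃! i : Fin c, a i ≠ b i)) :
    ∀ j : Fin c, runsCol j L = 1 + (N j - 1) * ∏ i ∈ Finset.Iio j, N i :=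
  recursive_gray_complete_table_runs_general hN le hrec L hs hall hgray
end

section
/- Let N ≥ 1 be an integer and p ∈ [0,1]. Let A and B be independent random subsets of {1,…,N}, where each element is included in A (respectively in B) independently with probability p. Then the probability that A and B are both nonempty and the maximum of A equals the minimum of B is exactly N·p²·(1−p)^{N−1}. Consequently, conditioned on both A and B being nonempty (for p ∈ (0,1]), this probability equals N p² (1−p)^{N−1} / (1−(1−p)^N)², which is the probability P↓↓_N(p) that two consecutive nonempty blocks under lexicographic sorting have a seamless join. -/
/-!
A set `A` has maximum `m` exactly when `A = insert m T` with `T ⊆ {x | x < m}`, so the weight of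
`{max A = m}` is `p (1 - p)^#{x | m < x}`: a factor `p` for `m`, `(1 - p)` for every element
above `m`, and total weight `1` for the free part `T` (binomial theorem). Symmetrically
`{min B = m}` has weight `p (1 - p)^#{x | x < m}`. The events `{max A = m ∧ min B = m}` are
disjoint in `m`, and each has weight `p² (1 - p)^(N - 1)` because the two exponents add up to
`N - 1`; summing over the `N` values of `m` gives the claim.
-/

open Finset

/-- `P↓↓_N(p) = N p² (1−p)^{N−1} / (1 − (1−p)^N)²`. -/
noncomputable def Pdd (N : ℕ) (p : ℝ) : ℝ :=
  (N : ℝ) * p ^ 2 * (1 - p) ^ (N - 1) / (1 - (1 - p) ^ N) ^ 2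

section
variable {α R : Type*} [Fintype α] [CommRing R]

/-- The probability that the random subset of `α` containing each element independently with
probability `p` equals `A`. -/
def bernoulliWeight (p : R) (A : Finset α) : R :=
  p ^ #A * (1 - p) ^ (Fintype.card α - #A)

theorem ite_exists_eq_sum_ite {ι : Type*} [Fintype ι] {P : ι → Prop} [DecidablePred P]
    (hP : ∀ i j, P i → P j → i = j) :
    (if ∃ i, P i then (1 : R) else 0) = ∑ i, if P i then 1 else 0 := by
  split_ifs with h
  · obtain ⟨i, hi⟩ := h
    rw [sum_eq_single i (fun j _ hj => if_neg fun hPj => hj (hP j i hPj hi)) (by simp), if_pos hi]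
  · exact (sum_eq_zero fun i _ => if_neg fun hi => h ⟨i, hi⟩).symm

theorem sum_bernoulliWeight_image_insert_powerset [DecidableEq α] (p : R) {m : α}
    {s : Finset α} (hm : m ∉ s) :
    ∑ A ∈ s.powerset.image (insert m), bernoulliWeight p A = p * (1 - p) ^ #(insert m s)ᶜ := by
  have hs : #s + 1 ≤ Fintype.card α := by
    simpa [card_insert_of_notMem hm] using card_le_univ (insert m s)
  have factor (T : Finset α) (hT : T ∈ s.powerset) : bernoulliWeight p (insert m T)
      = p * (1 - p) ^ #(insert m s)ᶜ * (p ^ #T * (1 - p) ^ (#s - #T)) := by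
    have hTs : #T ≤ #s := card_le_card (mem_powerset.mp hT)
    rw [bernoulliWeight, card_insert_of_notMem (notMem_mono (mem_powerset.mp hT) hm),
      card_compl, card_insert_of_notMem hm,
      show Fintype.card α - (#T + 1) = Fintype.card α - (#s + 1) + (#s - #T) by omega]
    ring
  rw [sum_image fun T hT U hU h => by
      rw [← erase_insert (notMem_mono (mem_powerset.mp hT) hm),
        ← erase_insert (notMem_mono (mem_powerset.mp hU) hm), h],
    sum_congr rfl factor, ← mul_sum, sum_pow_mul_eq_add_pow, add_sub_cancel, one_pow, mul_one]

variable [LinearOrder α]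

theorem filter_max_eq_coe_eq_image_insert (m : α) :
    {A ∈ (univ : Finset α).powerset | A.max = (m : WithBot α)}
      = ({x | x < m} : Finset α).powerset.image (insert m) := by
  ext A
  simp only [mem_filter, mem_powerset, subset_univ, true_and, mem_image]
  constructor
  · intro hA
    refine ⟨A.erase m, fun x hx => ?_, insert_erase (mem_of_max hA)⟩
    obtain ⟨hxm, hxA⟩ := mem_erase.mp hx
    exact mem_filter.mpr ⟨mem_univ x, (le_max_of_eq hxA hA).lt_of_ne hxm⟩
  · rintro ⟨T, hT, rfl⟩
    rw [max_insert, max_eq_left]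
    exact Finset.max_le fun x hx => WithBot.coe_le_coe.mpr (mem_filter.mp (hT hx)).2.le

theorem filter_min_eq_coe_eq_image_insert (m : α) :
    {B ∈ (univ : Finset α).powerset | B.min = (m : WithTop α)}
      = ({x | m < x} : Finset α).powerset.image (insert m) := by
  ext B
  simp only [mem_filter, mem_powerset, subset_univ, true_and, mem_image]
  constructor
  · intro hB
    refine ⟨B.erase m, fun x hx => ?_, insert_erase (mem_of_min hB)⟩
    obtain ⟨hxm, hxB⟩ := mem_erase.mp hx
    exact mem_filter.mpr ⟨mem_univ x, (min_le_of_eq hxB hB).lt_of_ne' hxm⟩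
  · rintro ⟨T, hT, rfl⟩
    rw [min_insert, min_eq_left]
    exact Finset.le_min fun x hx => WithTop.coe_le_coe.mpr (mem_filter.mp (hT hx)).2.le

theorem compl_insert_filter_lt (m : α) :
    (insert m ({x | x < m} : Finset α))ᶜ = ({x | m < x} : Finset α) := by
  ext x
  simp only [mem_compl, mem_insert, mem_filter, mem_univ, true_and, not_or, not_lt]
  exact ⟨fun ⟨hne, hle⟩ => hle.lt_of_ne' hne, fun h => ⟨h.ne', h.le⟩⟩

theorem compl_insert_filter_gt (m : α) :
    (insert m ({x | m < x} : Finset α))ᶜ = ({x | x < m} : Finset α) := by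
  ext x
  simp only [mem_compl, mem_insert, mem_filter, mem_univ, true_and, not_or, not_lt]
  exact ⟨fun ⟨hne, hle⟩ => hle.lt_of_ne hne, fun h => ⟨h.ne, h.le⟩⟩

theorem card_filter_lt_add_card_filter_gt (m : α) :
    #{x | x < m} + #{x | m < x} + 1 = Fintype.card α := by
  have hcard := congrArg card (compl_insert_filter_lt m)
  have hle := card_le_univ (insert m ({x | x < m} : Finset α))
  rw [card_compl] at hcard
  rw [card_insert_of_notMem (by simp)] at hcard hle
  omega

theorem sum_bernoulliWeight_mul_ite_max_eq (p : R) (m : α) :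
    ∑ A ∈ (univ : Finset α).powerset,
        bernoulliWeight p A * (if A.max = (m : WithBot α) then 1 else 0)
      = p * (1 - p) ^ #{x | m < x} := by
  simp only [mul_ite, mul_one, mul_zero]
  rw [← sum_filter, filter_max_eq_coe_eq_image_insert,
    sum_bernoulliWeight_image_insert_powerset p (by simp), compl_insert_filter_lt]

theorem sum_bernoulliWeight_mul_ite_min_eq (p : R) (m : α) :
    ∑ B ∈ (univ : Finset α).powerset,
        bernoulliWeight p B * (if B.min = (m : WithTop α) then 1 else 0)
      = p * (1 - p) ^ #{x | x < m} := by
  simp only [mul_ite, mul_one, mul_zero]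
  rw [← sum_filter, filter_min_eq_coe_eq_image_insert,
    sum_bernoulliWeight_image_insert_powerset p (by simp), compl_insert_filter_gt]

theorem sum_bernoulliWeight_mul_ite_max_eq_min (p : R) :
    ∑ A ∈ (univ : Finset α).powerset, ∑ B ∈ (univ : Finset α).powerset,
        bernoulliWeight p A * bernoulliWeight p B *
          (if ∃ m : α, A.max = (m : WithBot α) ∧ B.min = (m : WithTop α) then 1 else 0)
      = Fintype.card α * p ^ 2 * (1 - p) ^ (Fintype.card α - 1) := by
  have hunique (A B : Finset α) (m m' : α)
      (h : A.max = (m : WithBot α) ∧ B.min = (m : WithTop α))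
      (h' : A.max = (m' : WithBot α) ∧ B.min = (m' : WithTop α)) : m = m' :=
    WithBot.coe_injective (h.1.symm.trans h'.1)
  calc _ = ∑ A ∈ (univ : Finset α).powerset, ∑ B ∈ (univ : Finset α).powerset, ∑ m : α,
        bernoulliWeight p A * (if A.max = (m : WithBot α) then 1 else 0) *
          (bernoulliWeight p B * (if B.min = (m : WithTop α) then 1 else 0)) := by
        refine sum_congr rfl fun A _ => sum_congr rfl fun B _ => ?_
        rw [ite_exists_eq_sum_ite (hunique A B), mul_sum]
        refine sum_congr rfl fun m _ => ?_
        rw [mul_mul_mul_comm, ite_zero_mul_ite_zero, mul_one]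
    _ = ∑ m : α,
        (∑ A ∈ (univ : Finset α).powerset,
          bernoulliWeight p A * (if A.max = (m : WithBot α) then 1 else 0)) *
        (∑ B ∈ (univ : Finset α).powerset,
          bernoulliWeight p B * (if B.min = (m : WithTop α) then 1 else 0)) := by
        simp_rw [sum_mul_sum]
        exact (sum_congr rfl fun A _ => sum_comm).trans sum_comm
    _ = ∑ _m : α, p ^ 2 * (1 - p) ^ (Fintype.card α - 1) := by
        refine sum_congr rfl fun m _ => ?_
        rw [sum_bernoulliWeight_mul_ite_max_eq, sum_bernoulliWeight_mul_ite_min_eq,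
          ← card_filter_lt_add_card_filter_gt m, add_tsub_cancel_right, pow_add]
        ring
    _ = _ := by rw [sum_const, card_univ, nsmul_eq_mul, mul_assoc]

end

theorem seamless_join_probability_general (N : ℕ) (p : ℝ) :
    (∑ A ∈ (univ : Finset (Fin N)).powerset, ∑ B ∈ (univ : Finset (Fin N)).powerset,
        p ^ A.card * (1 - p) ^ (N - A.card) * (p ^ B.card * (1 - p) ^ (N - B.card)) *
          (if ∃ m : Fin N, A.max = (m : WithBot (Fin N)) ∧ B.min = (m : WithTop (Fin N))
            then 1 else 0))
      = (N : ℝ) * p ^ 2 * (1 - p) ^ (N - 1) ∧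
    (0 < p →
      ((N : ℝ) * p ^ 2 * (1 - p) ^ (N - 1)) / (1 - (1 - p) ^ N) ^ 2 = Pdd N p) := by
  refine ⟨?_, fun _ => rfl⟩
  have h := sum_bernoulliWeight_mul_ite_max_eq_min (α := Fin N) p
  simp only [bernoulliWeight, Fintype.card_fin] at h
  -- the two sides decide `∃ m : Fin N, _` by different (propositionally equal) instances
  convert h using 5

/-- For independent random subsets `A`, `B` of `{1,…,N}` with each element
included independently with probability `p`, the probability that `A` and `B`
are both nonempty and `max A = min B` is exactly `N·p²·(1−p)^{N−1}`;
consequently, conditioning on both blocks being nonempty gives the seamless-join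
probability `P↓↓_N(p) = N p² (1−p)^{N−1} / (1−(1−p)^N)²` of lexicographic
sorting. -/
theorem seamless_join_probability (N : ℕ) (hN : 1 ≤ N) (p : ℝ)
    (hp0 : 0 ≤ p) (hp1 : p ≤ 1) :
    (∑ A ∈ (univ : Finset (Fin N)).powerset, ∑ B ∈ (univ : Finset (Fin N)).powerset,
        p ^ A.card * (1 - p) ^ (N - A.card) * (p ^ B.card * (1 - p) ^ (N - B.card)) *
          (if ∃ m : Fin N, A.max = (m : WithBot (Fin N)) ∧ B.min = (m : WithTop (Fin N))
            then 1 else 0))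
      = (N : ℝ) * p ^ 2 * (1 - p) ^ (N - 1) ∧
    (0 < p →
      ((N : ℝ) * p ^ 2 * (1 - p) ^ (N - 1)) / (1 - (1 - p) ^ N) ^ 2 = Pdd N p) :=
  seamless_join_probability_general N p
end
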